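/- arXiv:2406.06794 — 3 statements merged into one kernel-verified Lean document; each statement's English description precedes it below -/
import Mathlib

section
/- Landscape Law, upper bound (Theorem 1.2(i)): Let Γ satisfy volume control with parameters (α,c_L,c_U) and the weak Poincaré inequality with constants (C_P,λ), and fix b ≥ 1. Then there exists a constant C > 0, depending only on α, c_L, c_U, C_P, λ and b, such that for every finite nonempty A ⊆ 𝕍, all symmetric bond weights μ_{xy} ∈ [0,1] and potentials V_x ≥ 0, every E > 0, and every countable covering 𝒫 of 𝕍 by balls of radius (CE)^{-1/2} with finite overlap constant b, one has N^A(E) ≤ N_u^{𝒫,A}(CE). -/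
/-!
Impose on `f : A → ℝ` that its degree-weighted sum over every ball of the cover containing a point
with `1 / u ≤ C E` vanishes. These constraints cut out a subspace of codimension at most the
number of such balls, so by min-max it suffices to show `E ‖f‖² < ⟨f, H^A f⟩` on it.
On a constrained ball `B`, the Poincaré inequality bounds `Σ_B f²` by `r² = (C E)⁻¹` times the
energy of `f` on `λB`; volume control bounds how often the balls `λB` overlap, and the total
energy is at most `4 ⟨f, H^A f⟩` because `0 ≤ μ ≤ 1` and `V ≥ 0`. On any other ball
`f² ≤ f² / (C E u)`, and the ground state transform together with `H^A u = 1` gives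
`Σ f² / u ≤ ⟨f, H^A f⟩`. Altogether `‖f‖² ≤ ⟨f, H^A f⟩ / (2E)`.
-/

open scoped BigOperators

namespace LandscapeGraph

variable {V : Type*}

/-- Ball of real radius `r` with respect to the shortest-path graph metric. -/
def gball (G : SimpleGraph V) (x : V) (r : ℝ) : Set V :=
  {y | G.Reachable x y ∧ (G.dist x y : ℝ) ≤ r}

/-- The degree of a vertex, as a real number. -/
noncomputable def ndeg (G : SimpleGraph V) (x : V) : ℝ := ((G.neighborSet x).ncard : ℝ)

/-- The graph Laplacian `Δf(x) = Σ_{y∼x} (f(y) - f(x))`. -/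
noncomputable def lap (G : SimpleGraph V) (f : V → ℝ) (x : V) : ℝ :=
  ∑ᶠ y ∈ G.neighborSet x, (f y - f x)

/-- Volume control (Ahlfors `α`-regularity) with parameters `(α, cL, cU)`. -/
def VolCtrl (G : SimpleGraph V) (α cL cU : ℝ) : Prop :=
  ∀ x : V, ∀ r : ℝ, 1 ≤ r →
    cL * r ^ α ≤ ((gball G x r).ncard : ℝ) ∧ ((gball G x r).ncard : ℝ) ≤ cU * r ^ α

/-- Degree-weighted average of `f` over a set `S`. -/
noncomputable def wavg (G : SimpleGraph V) (S : Set V) (f : V → ℝ) : ℝ :=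
  (∑ᶠ z ∈ S, f z * ndeg G z) / ∑ᶠ z ∈ S, ndeg G z

/-- The Dirichlet-type energy `Σ_{z,w∈S, z∼w} (f z - f w)²` (over ordered pairs). -/
noncomputable def pairEnergy (G : SimpleGraph V) (S : Set V) (f : V → ℝ) : ℝ :=
  ∑ᶠ z ∈ S, ∑ᶠ w ∈ {w ∈ S | G.Adj z w}, (f z - f w) ^ 2

/-- The weak Poincaré inequality with constants `(CP, lam)`. -/
def WeakPI (G : SimpleGraph V) (CP lam : ℝ) : Prop :=
  ∀ x : V, ∀ r : ℝ, 1 ≤ r → ∀ f : V → ℝ,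
    (∑ᶠ z ∈ gball G x r, (f z - wavg G (gball G x r) f) ^ 2) ≤
      CP * r ^ 2 * pairEnergy G (gball G x (lam * r)) f

/-- The Dirichlet restriction `H^A` of the Jacobi operator, acting on functions. -/
noncomputable def HAop (G : SimpleGraph V) (μ : V → V → ℝ) (Vpot : V → ℝ) (A : Set V)
    (f : V → ℝ) (x : V) : ℝ :=
  ndeg G x * f x - (∑ᶠ y ∈ {y ∈ A | G.Adj x y}, μ x y * f y) + Vpot x * f x

/-- Symmetric bond weights with values in `[0,1]`. -/
def BondWeights (G : SimpleGraph V) (μ : V → V → ℝ) : Prop :=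
  ∀ x y, G.Adj x y → μ x y = μ y x ∧ 0 ≤ μ x y ∧ μ x y ≤ 1

/-- `u` is the landscape function of `H^A`: positive on `A` and solving `H^A u = 1` on `A`. -/
def IsLandscape (G : SimpleGraph V) (μ : V → V → ℝ) (Vpot : V → ℝ) (A : Finset V)
    (u : V → ℝ) : Prop :=
  (∀ x ∈ A, 0 < u x) ∧ ∀ x ∈ A, HAop G μ Vpot (↑A) u x = 1

open Classical in
/-- The Dirichlet restriction `H^A` as a matrix indexed by `A`. -/
noncomputable def HAmat (G : SimpleGraph V) (μ : V → V → ℝ) (Vpot : V → ℝ) (A : Finset V) :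
    Matrix A A ℝ := fun x y =>
  (if (x : V) = (y : V) then ndeg G (x : V) + Vpot (x : V) else 0) -
    (if G.Adj (x : V) (y : V) then μ (x : V) (y : V) else 0)

open Classical in
/-- The integrated density of states: number of eigenvalues `≤ E` (with multiplicity),
divided by `|A|`. -/
noncomputable def NA {A : Finset V} {M : Matrix A A ℝ} (hM : M.IsHermitian) (E : ℝ) : ℝ :=
  ((Finset.univ.filter fun i => hM.eigenvalues i ≤ E).card : ℝ) / (A.card : ℝ)

/-- `Z` is the set of centers of a covering of `𝕍` by balls of radius `R`
with finite overlap constant `b`. -/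
def IsCover (G : SimpleGraph V) (Z : Set V) (R b : ℝ) : Prop :=
  (∀ y : V, ∃ z ∈ Z, y ∈ gball G z R) ∧
    ∀ y : V, (({z ∈ Z | y ∈ gball G z R}).ncard : ℝ) ≤ b

/-- The landscape counting function `N_u^{𝒫,A}(E)` for the cover with centers `Z` and radius `R`:
the number of balls `B` of the cover with `min_{x ∈ B∩A} 1/u(x) ≤ E`, divided by `|A|`. -/
noncomputable def Nu (G : SimpleGraph V) (u : V → ℝ) (A : Finset V) (Z : Set V) (R E : ℝ) : ℝ :=
  (({z ∈ Z | ∃ x ∈ A, x ∈ gball G z R ∧ 1 / u x ≤ E}).ncard : ℝ) / (A.card : ℝ)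

/-- The diameter of a finite set of vertices in the graph metric. -/
noncomputable def diamA (G : SimpleGraph V) (A : Finset V) : ℝ :=
  ((A.sup fun x => A.sup fun y => G.dist x y : ℕ) : ℝ)

/-- `A` has sufficient overlap with balls, with constant `cA`. -/
def SuffOverlap (G : SimpleGraph V) (A : Finset V) (α cA : ℝ) : Prop :=
  ∀ x ∈ A, ∀ r : ℝ, 1 ≤ r → r ≤ 4 * diamA G A →
    cA * r ^ α ≤ (((↑A : Set V) ∩ gball G x r).ncard : ℝ)

/-- The Dirichlet Laplacian `-Δ^B` of a region `B`, acting on functions: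
`(-Δ^B f)(x) = deg(x) f(x) - Σ_{y ∈ B, y ∼ x} f(y)`. -/
noncomputable def negDirLap (G : SimpleGraph V) (B : Set V) (f : V → ℝ) (x : V) : ℝ :=
  ndeg G x * f x - ∑ᶠ y ∈ {y ∈ B | G.Adj x y}, f y

/-- Exterior (vertex) boundary of a set. -/
def extBoundary (G : SimpleGraph V) (S : Set V) : Set V :=
  {x | x ∉ S ∧ ∃ y ∈ S, G.Adj x y}

/-- Ball with respect to an abstract metric `d`. -/
def dball (d : V → V → ℝ) (ξ : V) (R : ℝ) : Set V := {y | d ξ y ≤ R}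

/-- The harmonic weight assumption: a metric `d` strongly equivalent (constant `c`) to the
graph metric, together with harmonic weights `h ξ R : B^d(ξ,R) → [0,1]` satisfying the
submean property for subharmonic functions (with equality for harmonic ones), and a
uniform lower bound `c' / |B^d(ξ,R)|` off `bad' sets `X ξ R` of asymptotically
negligible proportion. -/
structure HarmonicWeight (G : SimpleGraph V) (d : V → V → ℝ) (h : V → ℝ → V → ℝ)
    (X : V → ℝ → Set V) (c c' : ℝ) : Prop where
  c_one : 1 ≤ c
  c'_pos : 0 < c'
  d_self : ∀ x, d x x = 0
  d_eq_zero : ∀ x y, d x y = 0 → x = y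
  d_symm : ∀ x y, d x y = d y x
  d_triangle : ∀ x y z, d x z ≤ d x y + d y z
  d_lower : ∀ x y, c⁻¹ * (G.dist x y : ℝ) ≤ d x y
  d_upper : ∀ x y, d x y ≤ c * (G.dist x y : ℝ)
  h_mem : ∀ ξ (R : ℝ) y, y ∈ dball d ξ R → h ξ R y ∈ Set.Icc (0 : ℝ) 1
  submean : ∀ ξ (R : ℝ), 0 < R → ∀ f : V → ℝ,
    (∀ x ∈ dball d ξ R ∪ extBoundary G (dball d ξ R), 0 ≤ lap G f x) →
    f ξ ≤ ∑ᶠ y ∈ dball d ξ R, h ξ R y * f y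
  harm_eq : ∀ ξ (R : ℝ), 0 < R → ∀ f : V → ℝ,
    (∀ x ∈ dball d ξ R ∪ extBoundary G (dball d ξ R), lap G f x = 0) →
    f ξ = ∑ᶠ y ∈ dball d ξ R, h ξ R y * f y
  X_subset : ∀ ξ (R : ℝ), X ξ R ⊆ dball d ξ R
  h_lower : ∀ ξ (R : ℝ), ∀ y ∈ dball d ξ R \ X ξ R,
    c' / ((dball d ξ R).ncard : ℝ) ≤ h ξ R y
  X_small : ∀ ε : ℝ, 0 < ε → ∃ R₀ : ℝ, ∀ R : ℝ, R₀ ≤ R → ∀ ξ : V,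
    ((X ξ R).ncard : ℝ) ≤ ε * ((dball d ξ R).ncard : ℝ)

end LandscapeGraph

open Finset Matrix

theorem Finset.sum_sum_filter_eq_sum_card_mul {ι κ : Type*} (W : Finset κ) (s : Finset ι)
    (P : κ → ι → Prop) [∀ z p, Decidable (P z p)] (g : ι → ℝ) :
    ∑ z ∈ W, ∑ p ∈ s with P z p, g p = ∑ p ∈ s, (#{z ∈ W | P z p} : ℝ) * g p := by
  rw [sum_comm' (t' := s) (s' := fun p => {z ∈ W | P z p}) (by simp only [mem_filter]; tauto)]
  simp_rw [sum_const, nsmul_eq_mul]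

theorem Finset.sum_le_sum_sum_filter_of_cover {ι κ : Type*} {W : Finset κ} {s : Finset ι}
    {P : κ → ι → Prop} [∀ z p, Decidable (P z p)] {g : ι → ℝ} (hg : ∀ p ∈ s, 0 ≤ g p)
    (hcov : ∀ p ∈ s, ∃ z ∈ W, P z p) :
    ∑ p ∈ s, g p ≤ ∑ z ∈ W, ∑ p ∈ s with P z p, g p := by
  rw [sum_sum_filter_eq_sum_card_mul]
  refine sum_le_sum fun p hp => le_mul_of_one_le_left (hg p hp) ?_
  obtain ⟨z, hz, hPz⟩ := hcov p hp
  exact_mod_cast card_pos.2 ⟨z, mem_filter.2 ⟨hz, hPz⟩⟩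

theorem Finset.sum_sum_filter_le_mul_sum {ι κ : Type*} {W : Finset κ} {s : Finset ι}
    {P : κ → ι → Prop} [∀ z p, Decidable (P z p)] {g : ι → ℝ} {β : ℝ} (hg : ∀ p ∈ s, 0 ≤ g p)
    (hover : ∀ p ∈ s, (#{z ∈ W | P z p} : ℝ) ≤ β) :
    ∑ z ∈ W, ∑ p ∈ s with P z p, g p ≤ β * ∑ p ∈ s, g p := by
  rw [sum_sum_filter_eq_sum_card_mul, mul_sum]
  exact sum_le_sum fun p hp => mul_le_mul_of_nonneg_right (hover p hp) (hg p hp)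

theorem Finset.sum_sum_nonneg_of_add_swap_nonneg {ι : Type*} {s : Finset ι} {t : ι → ι → ℝ}
    (ht : ∀ p ∈ s, ∀ q ∈ s, 0 ≤ t p q + t q p) : 0 ≤ ∑ p ∈ s, ∑ q ∈ s, t p q := by
  have h2 : 2 * ∑ p ∈ s, ∑ q ∈ s, t p q = ∑ p ∈ s, ∑ q ∈ s, (t p q + t q p) := by
    simp_rw [sum_add_distrib]
    rw [sum_comm (f := fun p q => t q p)]
    ring
  have : 0 ≤ ∑ p ∈ s, ∑ q ∈ s, (t p q + t q p) :=
    sum_nonneg fun p hp => sum_nonneg fun q hq => ht p hp q hq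
  linarith

theorem finsum_mem_eq_sum_filter_of_support_subset {ι : Type*} {S : Set ι} [DecidablePred (· ∈ S)]
    (T : Finset ι) {g : ι → ℝ} (hg : ∀ q ∈ S, g q ≠ 0 → q ∈ T) :
    ∑ᶠ q ∈ S, g q = ∑ q ∈ T with q ∈ S, g q := by
  refine finsum_mem_eq_sum_of_inter_support_eq g ?_
  ext q
  simp only [Set.mem_inter_iff, coe_filter, Set.mem_ofPred_eq, Function.mem_support]
  exact ⟨fun h => ⟨⟨hg q h.1 h.2, h.1⟩, h.2⟩, fun h => ⟨h.1.2, h.2⟩⟩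

-- `Φ` is injective on the span of the eigenvectors with eigenvalue `≤ E`, where the form is at
-- most `E ‖f‖²`.
theorem Matrix.IsHermitian.card_eigenvalues_le_le_finrank {n W : Type*} [Fintype n]
    [DecidableEq n] [AddCommGroup W] [Module ℝ W] [FiniteDimensional ℝ W] {M : Matrix n n ℝ}
    (hM : M.IsHermitian) (E : ℝ) (Φ : (n → ℝ) →ₗ[ℝ] W)
    (hΦ : ∀ f, Φ f = 0 → f ≠ 0 → E * (f ⬝ᵥ f) < f ⬝ᵥ (M *ᵥ f)) :
    #{i | hM.eigenvalues i ≤ E} ≤ Module.finrank ℝ W := by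
  set S : Finset n := {i | hM.eigenvalues i ≤ E}
  set v : S → EuclideanSpace ℝ n := fun i => hM.eigenvectorBasis i
  have hv : Orthonormal ℝ v := hM.eigenvectorBasis.orthonormal.comp _ Subtype.val_injective
  set Ψ : (S → ℝ) →ₗ[ℝ] (n → ℝ) :=
    (WithLp.linearEquiv 2 ℝ (n → ℝ)).toLinearMap ∘ₗ Fintype.linearCombination ℝ v
  have hΨ : ∀ c, Ψ c = WithLp.ofLp (∑ i, c i • v i) := fun c => by
    simp [Ψ, Fintype.linearCombination_apply]
  have hMΨ : ∀ c, M *ᵥ Ψ c = WithLp.ofLp (∑ i : S, (hM.eigenvalues i * c i) • v i) := fun c => by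
    simp [hΨ, Matrix.mulVec_sum, Matrix.mulVec_smul, v, hM.mulVec_eigenvectorBasis, smul_smul,
      mul_comm]
  have hdot : ∀ a b : S → ℝ, WithLp.ofLp (∑ i, a i • v i) ⬝ᵥ WithLp.ofLp (∑ i, b i • v i)
      = ∑ i, a i * b i := fun a b => by
    have h := EuclideanSpace.inner_eq_star_dotProduct (∑ i, b i • v i) (∑ i, a i • v i)
    rw [star_trivial] at h
    rw [← h, hv.inner_sum]
    simp [mul_comm]
  have hinj : Function.Injective (Φ ∘ₗ Ψ) := by
    rw [← LinearMap.ker_eq_bot, LinearMap.ker_eq_bot']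
    intro c hc
    by_contra hc0
    have hnorm : Ψ c ⬝ᵥ Ψ c = ∑ i, c i ^ 2 := by simp_rw [hΨ, hdot, sq]
    have hpos : 0 < ∑ i, c i ^ 2 := by
      obtain ⟨i, hi⟩ := Function.ne_iff.1 hc0
      have hi : c i ≠ 0 := hi
      exact sum_pos' (fun j _ => sq_nonneg _) ⟨i, mem_univ _, by positivity⟩
    have hlt := hΦ (Ψ c) hc (fun h => by rw [h, zero_dotProduct] at hnorm; linarith)
    have hle : Ψ c ⬝ᵥ (M *ᵥ Ψ c) ≤ E * (Ψ c ⬝ᵥ Ψ c) := by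
      rw [hnorm, hMΨ, hΨ, hdot, mul_sum]
      refine sum_le_sum fun i _ => ?_
      have := (mem_filter.1 i.2).2
      nlinarith [sq_nonneg (c i)]
    linarith
  simpa using LinearMap.finrank_le_finrank_of_injective hinj

namespace LandscapeGraph

open scoped Classical

variable {V : Type*} {G : SimpleGraph V}

theorem gball_mono {x : V} {r r' : ℝ} (h : r ≤ r') : gball G x r ⊆ gball G x r' :=
  fun _ hy => ⟨hy.1, hy.2.trans h⟩

theorem mem_gball_self {x : V} {r : ℝ} (hr : 0 ≤ r) : x ∈ gball G x r :=
  ⟨.refl x, by simpa using hr⟩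

theorem mem_gball_comm {x y : V} {r : ℝ} : x ∈ gball G y r ↔ y ∈ gball G x r := by
  simp only [gball, Set.mem_ofPred_eq, SimpleGraph.dist_comm, SimpleGraph.reachable_comm]

theorem mem_gball_one_of_adj {x y : V} (h : G.Adj x y) : y ∈ gball G x 1 :=
  ⟨h.reachable, by simp [SimpleGraph.dist_eq_one_iff_adj.2 h]⟩

theorem gball_eq_singleton {x : V} {r : ℝ} (hr0 : 0 ≤ r) (hr1 : r < 1) :
    gball G x r = {x} := by
  ext y
  refine ⟨fun ⟨hxy, hd⟩ => ?_, fun h => h ▸ mem_gball_self hr0⟩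
  have : G.dist x y < 1 := by exact_mod_cast hd.trans_lt hr1
  exact (hxy.dist_eq_zero_iff.1 (Nat.lt_one_iff.1 this)).symm

theorem gball_subset_gball_of_mem {p ζ : V} {r s : ℝ} (hp : p ∈ gball G ζ s) :
    gball G ζ r ⊆ gball G p (s + r) := fun y hy => by
  refine ⟨hp.1.symm.trans hy.1, ?_⟩
  have h := hp.1.symm.dist_triangle_left y
  rw [SimpleGraph.dist_comm (u := p) (v := ζ)] at h
  calc (G.dist p y : ℝ) ≤ G.dist ζ p + G.dist ζ y := by exact_mod_cast h
    _ ≤ s + r := add_le_add hp.2 hy.2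

namespace VolCtrl

variable {α cL cU : ℝ}

theorem finite_gball (hvol : VolCtrl G α cL cU) (hcL : 0 < cL) (x : V) (r : ℝ) :
    (gball G x r).Finite := by
  refine Set.Finite.subset ?_ (gball_mono (le_max_left r 1))
  by_contra hinf
  have h := (hvol x (max r 1) (le_max_right r 1)).1
  rw [Set.Infinite.ncard hinf, Nat.cast_zero] at h
  have : 0 < cL * max r 1 ^ α := by positivity
  linarith

theorem finite_neighborSet (hvol : VolCtrl G α cL cU) (hcL : 0 < cL) (x : V) :
    (G.neighborSet x).Finite :=
  (hvol.finite_gball hcL x 1).subset fun _ => mem_gball_one_of_adj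

theorem ndeg_pos (hvol : VolCtrl G α cL cU) (hcL : 0 < cL) (hconn : G.Connected) [Infinite V]
    (x : V) : 0 < ndeg G x := by
  obtain ⟨y, hy⟩ := exists_ne x
  obtain ⟨w⟩ := hconn.preconnected x y
  obtain ⟨z, hz⟩ : (G.neighborSet x).Nonempty := by
    cases w with
    | nil => exact absurd rfl hy
    | cons h _ => exact ⟨_, h⟩
  unfold ndeg
  exact_mod_cast (Set.ncard_pos (hvol.finite_neighborSet hcL x)).2 ⟨z, hz⟩

theorem finite_centers (hvol : VolCtrl G α cL cU) (hcL : 0 < cL) (A : Finset V) (Z : Set V)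
    (r : ℝ) : {z ∈ Z | ∃ x ∈ A, x ∈ gball G z r}.Finite :=
  (A.finite_toSet.biUnion fun x _ => hvol.finite_gball hcL x r).subset
    fun _ ⟨_, _, hx, hxz⟩ => Set.mem_biUnion hx (mem_gball_comm.1 hxz)

theorem exists_superset_neighbors (hvol : VolCtrl G α cL cU) (hcL : 0 < cL) (A : Finset V) :
    ∃ T : Finset V, A ⊆ T ∧ ∀ x ∈ A, ∀ y, G.Adj x y → y ∈ T :=
  ⟨A.biUnion fun x => (hvol.finite_gball hcL x 1).toFinset,
    fun x hx => mem_biUnion.2 ⟨x, hx, by simpa using mem_gball_self zero_le_one⟩,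
    fun x hx _ hxy => mem_biUnion.2 ⟨x, hx, by simpa using mem_gball_one_of_adj hxy⟩⟩

theorem card_filter_mem_gball_le (hvol : VolCtrl G α cL cU) (hcL : 0 < cL) {Z : Set V}
    {r b : ℝ} (hover : ∀ y : V, (({z ∈ Z | y ∈ gball G z r}).ncard : ℝ) ≤ b) {W : Finset V}
    (hWZ : ↑W ⊆ Z) (y : V) : (#{z ∈ W | y ∈ gball G z r} : ℝ) ≤ b := by
  refine le_trans ?_ (hover y)
  rw [← Set.ncard_coe_finset]
  refine Nat.cast_le.2 (Set.ncard_le_ncard (fun z hz => ?_)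
    ((hvol.finite_gball hcL y r).subset fun z hz => mem_gball_comm.1 hz.2))
  rw [coe_filter] at hz
  exact ⟨hWZ hz.1, hz.2⟩

/-- The balls `B(ζ, r)`, `ζ ∈ W`, lie in `B(p, (λ + 1) r)`, overlap at most `b` times and each has
volume at least `cL r^α`. -/
theorem card_le_of_forall_mem_gball (hvol : VolCtrl G α cL cU) (hcL : 0 < cL) {Z : Set V}
    {r b lam : ℝ} (hr : 1 ≤ r) (hlam : 0 ≤ lam) (hb : 0 ≤ b)
    (hover : ∀ y : V, (({z ∈ Z | y ∈ gball G z r}).ncard : ℝ) ≤ b) {p : V} {W : Finset V}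
    (hWZ : ↑W ⊆ Z) (hW : ∀ ζ ∈ W, p ∈ gball G ζ (lam * r)) :
    (#W : ℝ) ≤ b * cU * (lam + 1) ^ α / cL := by
  set Bp := (hvol.finite_gball hcL p ((lam + 1) * r)).toFinset
  have hball : ∀ ζ ∈ W, (({y ∈ Bp | y ∈ gball G ζ r} : Finset V) : Set V) = gball G ζ r :=
      fun ζ hζ => by
    have := gball_subset_gball_of_mem (r := r) (hW ζ hζ)
    rw [← add_one_mul] at this
    ext y
    simpa [Bp] using fun hy => this hy
  have hlow : ∀ ζ ∈ W, cL * r ^ α ≤ ∑ y ∈ Bp with y ∈ gball G ζ r, (1 : ℝ) := fun ζ hζ => by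
    rw [sum_const, nsmul_one, ← Set.ncard_coe_finset, hball ζ hζ]
    exact (hvol ζ r hr).1
  have hBp : ∑ y ∈ Bp, (1 : ℝ) ≤ cU * ((lam + 1) ^ α * r ^ α) := by
    rw [sum_const, nsmul_one, ← Set.ncard_coe_finset, Set.Finite.coe_toFinset,
      ← Real.mul_rpow (by linarith) (by linarith)]
    exact (hvol p _ (by nlinarith)).2
  have hcount := sum_sum_filter_le_mul_sum (s := Bp) (P := fun ζ y => y ∈ gball G ζ r)
    (fun _ _ => zero_le_one) fun y _ => hvol.card_filter_mem_gball_le hcL hover hWZ y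
  have hrα : 0 < r ^ α := by positivity
  rw [le_div_iff₀ hcL]
  have := (card_nsmul_le_sum W _ _ hlow).trans hcount
  rw [nsmul_eq_mul] at this
  nlinarith [mul_le_mul_of_nonneg_left hBp hb]

end VolCtrl

theorem pairEnergy_coe_finset (T : Finset V) (F : V → ℝ) :
    pairEnergy G ↑T F = ∑ p ∈ T, ∑ q ∈ T with G.Adj p q, (F p - F q) ^ 2 := by
  rw [pairEnergy, finsum_mem_coe_finset]
  refine sum_congr rfl fun p _ => ?_
  rw [show {q ∈ (↑T : Set V) | G.Adj p q} = ↑({q ∈ T | G.Adj p q} : Finset V) by simp,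
    finsum_mem_coe_finset]

section Energy

variable {A T : Finset V} {F : V → ℝ}

theorem mem_of_sq_sub_ne_zero (hAT : A ⊆ T) (hnbr : ∀ x ∈ A, ∀ y, G.Adj x y → y ∈ T)
    (hF : ∀ y ∉ A, F y = 0) {p q : V} (hpq : G.Adj p q) (h : (F p - F q) ^ 2 ≠ 0) :
    p ∈ T ∧ q ∈ T := by
  by_cases hp : p ∈ A
  · exact ⟨hAT hp, hnbr p hp q hpq⟩
  by_cases hq : q ∈ A
  · exact ⟨hnbr q hq p hpq.symm, hAT hq⟩
  simp [hF p hp, hF q hq] at h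

theorem pairEnergy_le_sum_filter (hAT : A ⊆ T) (hnbr : ∀ x ∈ A, ∀ y, G.Adj x y → y ∈ T)
    (hF : ∀ y ∉ A, F y = 0) (S : Set V) :
    pairEnergy G S F ≤ ∑ p ∈ T with p ∈ S, ∑ q ∈ T with G.Adj p q, (F p - F q) ^ 2 := by
  have hinner : ∀ p, ∑ᶠ q ∈ {q ∈ S | G.Adj p q}, (F p - F q) ^ 2
      = ∑ q ∈ T with q ∈ {q ∈ S | G.Adj p q}, (F p - F q) ^ 2 := fun p =>
    finsum_mem_eq_sum_filter_of_support_subset T fun q hq h =>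
      (mem_of_sq_sub_ne_zero hAT hnbr hF hq.2 h).2
  simp_rw [pairEnergy, hinner]
  rw [finsum_mem_eq_sum_filter_of_support_subset T fun p _ h => ?_]
  · refine sum_le_sum fun p _ => sum_le_sum_of_subset_of_nonneg ?_ fun _ _ _ => sq_nonneg _
    intro q hq
    simp only [mem_filter, Set.mem_ofPred_eq] at hq ⊢
    exact ⟨hq.1, hq.2.2⟩
  · obtain ⟨q, hq, hne⟩ := exists_ne_zero_of_sum_ne_zero h
    exact (mem_of_sq_sub_ne_zero hAT hnbr hF (mem_filter.1 hq).2.2 hne).1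

end Energy

theorem sum_coe_sort_extend {A : Finset V} (f : A → ℝ) (g : V → ℝ → ℝ) :
    ∑ x : A, g x (f x) = ∑ x ∈ A, g x (Function.extend Subtype.val f 0 x) := by
  rw [← sum_coe_sort A]
  simp

section Jacobi

variable {μ : V → V → ℝ} {Vpot : V → ℝ}

theorem HAop_coe_finset (A : Finset V) (F : V → ℝ) (x : V) :
    HAop G μ Vpot ↑A F x = (ndeg G x + Vpot x) * F x - ∑ y ∈ A with G.Adj x y, μ x y * F y := by
  rw [HAop, show {y ∈ (↑A : Set V) | G.Adj x y} = ↑({y ∈ A | G.Adj x y} : Finset V) by simp,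
    finsum_mem_coe_finset]
  ring

/-- The ground state transform: for `u > 0` the form `⟨F, H^A F⟩` exceeds
`Σ F² (H^A u) / u` by `½ Σ μ_{xy} (F_x u_y - F_y u_x)² / (u_x u_y) ≥ 0`. -/
theorem sum_sq_div_mul_HAop_le (hμ : BondWeights G μ) {A : Finset V} {u : V → ℝ}
    (hu : ∀ x ∈ A, 0 < u x) (F : V → ℝ) :
    ∑ x ∈ A, F x ^ 2 / u x * HAop G μ Vpot ↑A u x ≤ ∑ x ∈ A, F x * HAop G μ Vpot ↑A F x := by
  set t : V → V → ℝ := fun x y => if G.Adj x y then μ x y * (F x ^ 2 / u x * u y - F x * F y)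
    else 0
  have hdiff : ∑ x ∈ A, F x * HAop G μ Vpot ↑A F x - ∑ x ∈ A, F x ^ 2 / u x * HAop G μ Vpot ↑A u x
      = ∑ x ∈ A, ∑ y ∈ A, t x y := by
    rw [← sum_sub_distrib]
    refine sum_congr rfl fun x hx => ?_
    have hux := (hu x hx).ne'
    simp only [HAop_coe_finset, t, ← sum_filter, mul_sub, mul_sum, sum_sub_distrib]
    field_simp
    ring
  have hswap : 0 ≤ ∑ x ∈ A, ∑ y ∈ A, t x y := by
    refine sum_sum_nonneg_of_add_swap_nonneg fun x hx y hy => ?_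
    by_cases hxy : G.Adj x y
    · have hux := hu x hx
      have huy := hu y hy
      have hsq : t x y + t y x = μ x y * ((F x * u y - F y * u x) ^ 2 / (u x * u y)) := by
        simp only [t, if_pos hxy, if_pos hxy.symm, ← (hμ x y hxy).1]
        field_simp
        ring
      rw [hsq]
      exact mul_nonneg (hμ x y hxy).2.1 (by positivity)
    · simp [t, hxy, G.adj_comm y x]
  linarith

theorem IsLandscape.sum_sq_div_le_sum_mul_HAop {A : Finset V} {u : V → ℝ}
    (hu : IsLandscape G μ Vpot A u) (hμ : BondWeights G μ) (F : V → ℝ) :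
    ∑ x ∈ A, F x ^ 2 / u x ≤ ∑ x ∈ A, F x * HAop G μ Vpot ↑A F x := by
  refine le_of_eq_of_le (sum_congr rfl fun x hx => ?_) (sum_sq_div_mul_HAop_le hμ hu.1 F)
  rw [hu.2 x hx, mul_one]

theorem sum_mul_HAop_eq_sum_adj {A T : Finset V} (hAT : A ⊆ T)
    (hnbr : ∀ x ∈ A, ∀ y, G.Adj x y → y ∈ T) {F : V → ℝ} (hF : ∀ y ∉ A, F y = 0) :
    ∑ x ∈ A, F x * HAop G μ Vpot ↑A F x
      = ∑ p ∈ T, (Vpot p * F p ^ 2 + ∑ q ∈ T with G.Adj p q, F p * (F p - μ p q * F q)) := by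
  have hdeg : ∀ x ∈ A, ndeg G x = #{y ∈ T | G.Adj x y} := fun x hx => by
    rw [ndeg, ← Set.ncard_coe_finset]
    congr 2
    ext y
    simpa using fun h => hnbr x hx y h
  have hsupp : ∀ x, ∑ y ∈ A with G.Adj x y, μ x y * F y = ∑ y ∈ T with G.Adj x y, μ x y * F y :=
    fun x => sum_subset (filter_subset_filter _ hAT) fun y hyT hyA => by
      simp only [mem_filter, not_and] at hyT hyA
      simp [hF y fun h => hyA h hyT.2]
  rw [← sum_subset hAT fun p _ hp => by simp [hF p hp]]
  refine sum_congr rfl fun x hx => ?_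
  rw [HAop_coe_finset, hdeg x hx, hsupp x]
  simp only [mul_sub, sum_sub_distrib, sum_const, nsmul_eq_mul, mul_sum]
  ring

theorem pairEnergy_le_four_mul_sum_mul_HAop (hμ : BondWeights G μ) (hV : ∀ x, 0 ≤ Vpot x)
    {A T : Finset V} (hAT : A ⊆ T) (hnbr : ∀ x ∈ A, ∀ y, G.Adj x y → y ∈ T) {F : V → ℝ}
    (hF : ∀ y ∉ A, F y = 0) :
    pairEnergy G ↑T F ≤ 4 * ∑ x ∈ A, F x * HAop G μ Vpot ↑A F x := by
  set t : V → V → ℝ := fun p q =>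
    if G.Adj p q then 4 * (F p * (F p - μ p q * F q)) - (F p - F q) ^ 2 else 0
  have hgap : 4 * ∑ x ∈ A, F x * HAop G μ Vpot ↑A F x - pairEnergy G ↑T F
      = 4 * ∑ p ∈ T, Vpot p * F p ^ 2 + ∑ p ∈ T, ∑ q ∈ T, t p q := by
    rw [sum_mul_HAop_eq_sum_adj hAT hnbr hF, pairEnergy_coe_finset, mul_sum, mul_sum, ← sum_sub_distrib, ← sum_add_distrib]
    refine sum_congr rfl fun p _ => ?_
    simp only [t, sum_filter, mul_add, mul_sum, ← sum_sub_distrib, add_sub_assoc]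
    congr 1
    exact sum_congr rfl fun q _ => by split_ifs <;> ring
  have hV : 0 ≤ ∑ p ∈ T, Vpot p * F p ^ 2 := sum_nonneg fun p _ => by have := hV p; positivity
  -- on neighbours, `t p q + t q p = 2 (1 - μ) (F p + F q)² + 2 μ (F p - F q)² ≥ 0`
  have ht : 0 ≤ ∑ p ∈ T, ∑ q ∈ T, t p q := by
    refine sum_sum_nonneg_of_add_swap_nonneg fun p _ q _ => ?_
    by_cases hpq : G.Adj p q
    · obtain ⟨hsymm, h0, h1⟩ := hμ p q hpq
      simp only [t, if_pos hpq, if_pos hpq.symm, ← hsymm]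
      nlinarith [mul_nonneg (sub_nonneg.2 h1) (sq_nonneg (F p + F q)),
        mul_nonneg h0 (sq_nonneg (F p - F q))]
    · simp [t, hpq, G.adj_comm q p]
  linarith

theorem HAmat_mulVec {A : Finset V} (f : A → ℝ) (x : A) :
    (HAmat G μ Vpot A *ᵥ f) x = HAop G μ Vpot ↑A (Function.extend Subtype.val f 0) x := by
  rw [HAop_coe_finset, Subtype.val_injective.extend_apply, sum_filter,
    ← sum_coe_sort_extend f fun y a => if G.Adj x y then μ x y * a else 0]
  simp only [mulVec, dotProduct, HAmat, sub_mul, sum_sub_distrib, ite_mul, zero_mul,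
    ← Subtype.ext_iff, sum_ite_eq, mem_univ, if_true]

theorem dotProduct_HAmat_mulVec {A : Finset V} (f : A → ℝ) :
    f ⬝ᵥ (HAmat G μ Vpot A *ᵥ f) = ∑ x ∈ A, Function.extend Subtype.val f 0 x *
      HAop G μ Vpot ↑A (Function.extend Subtype.val f 0) x := by
  simp only [dotProduct, HAmat_mulVec]
  exact sum_coe_sort_extend f fun x a => a * HAop G μ Vpot ↑A (Function.extend Subtype.val f 0) x

end Jacobi

section Covering

variable {α cL cU CP lam b : ℝ} {A : Finset V} {F : V → ℝ}

theorem sum_sq_le_of_sum_mul_ndeg_eq_zero (hpi : WeakPI G CP lam) (hF : ∀ y ∉ A, F y = 0)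
    {z : V} {r : ℝ} (hr : 1 ≤ r) (hmean : ∑ x ∈ A with x ∈ gball G z r, F x * ndeg G x = 0) :
    ∑ x ∈ A with x ∈ gball G z r, F x ^ 2 ≤ CP * r ^ 2 * pairEnergy G (gball G z (lam * r)) F := by
  have hsupp : ∀ g : V → ℝ, (∀ y, F y = 0 → g y = 0) →
      ∑ᶠ y ∈ gball G z r, g y = ∑ x ∈ A with x ∈ gball G z r, g x := fun g hg =>
    finsum_mem_eq_sum_filter_of_support_subset A fun y _ h => by_contra fun hy => h (hg y (hF y hy))
  have hwavg : wavg G (gball G z r) F = 0 := by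
    rw [wavg, hsupp (fun y => F y * ndeg G y) fun y h => by simp [h], hmean, zero_div]
  simpa [hwavg, hsupp (fun y => F y ^ 2) fun y h => by simp [h]] using hpi z r hr F

theorem sum_sq_eq_zero_of_lt_one (hdeg : ∀ x, 0 < ndeg G x) {z : V} {r : ℝ} (hr0 : 0 ≤ r)
    (hr1 : r < 1) (hmean : ∑ x ∈ A with x ∈ gball G z r, F x * ndeg G x = 0) :
    ∑ x ∈ A with x ∈ gball G z r, F x ^ 2 = 0 := by
  simp only [gball_eq_singleton hr0 hr1, Set.mem_singleton_iff, sum_filter, sum_ite_eq'] at hmean ⊢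
  split_ifs at hmean ⊢ <;> simp_all [(hdeg z).ne']

theorem sum_sum_sq_le_pairEnergy (hvol : VolCtrl G α cL cU) (hcL : 0 < cL) (hcU : 0 ≤ cU)
    (hpi : WeakPI G CP lam) (hCP : 0 ≤ CP) (hlam : 0 ≤ lam) (hb : 0 ≤ b)
    (hdeg : ∀ x, 0 < ndeg G x) {Z : Set V} {r : ℝ} (hr : 0 < r)
    (hover : ∀ y : V, (({z ∈ Z | y ∈ gball G z r}).ncard : ℝ) ≤ b) {T W : Finset V}
    (hAT : A ⊆ T) (hnbr : ∀ x ∈ A, ∀ y, G.Adj x y → y ∈ T) (hF : ∀ y ∉ A, F y = 0)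
    (hWZ : ↑W ⊆ Z) (hmean : ∀ z ∈ W, ∑ x ∈ A with x ∈ gball G z r, F x * ndeg G x = 0) :
    ∑ z ∈ W, ∑ x ∈ A with x ∈ gball G z r, F x ^ 2
      ≤ CP * (b * cU * (lam + 1) ^ α / cL) * r ^ 2 * pairEnergy G ↑T F := by
  have hE : 0 ≤ pairEnergy G ↑T F := by
    rw [pairEnergy_coe_finset]
    exact sum_nonneg fun _ _ => sum_nonneg fun _ _ => sq_nonneg _
  rcases lt_or_ge r 1 with hr1 | hr1
  · rw [sum_eq_zero fun z hz => sum_sq_eq_zero_of_lt_one hdeg hr.le hr1 (hmean z hz)]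
    positivity
  have hcount : ∀ p ∈ T, (#{z ∈ W | p ∈ gball G z (lam * r)} : ℝ)
      ≤ b * cU * (lam + 1) ^ α / cL := fun p _ =>
    hvol.card_le_of_forall_mem_gball hcL hr1 hlam hb hover
      (fun z hz => hWZ (mem_filter.1 hz).1) fun z hz => (mem_filter.1 hz).2
  calc ∑ z ∈ W, ∑ x ∈ A with x ∈ gball G z r, F x ^ 2
      ≤ ∑ z ∈ W, CP * r ^ 2 * ∑ p ∈ T with p ∈ gball G z (lam * r),
          ∑ q ∈ T with G.Adj p q, (F p - F q) ^ 2 := by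
        refine sum_le_sum fun z hz => ?_
        refine (sum_sq_le_of_sum_mul_ndeg_eq_zero hpi hF hr1 (hmean z hz)).trans ?_
        gcongr
        exact pairEnergy_le_sum_filter hAT hnbr hF _
    _ ≤ CP * r ^ 2 * ((b * cU * (lam + 1) ^ α / cL) * pairEnergy G ↑T F) := by
        rw [← mul_sum, pairEnergy_coe_finset]
        gcongr
        exact sum_sum_filter_le_mul_sum (fun _ _ => sum_nonneg fun _ _ => sq_nonneg _) hcount
    _ = CP * (b * cU * (lam + 1) ^ α / cL) * r ^ 2 * pairEnergy G ↑T F := by ring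

theorem sum_sum_sq_le_of_lt_inv (hvol : VolCtrl G α cL cU) (hcL : 0 < cL) {Z : Set V}
    {r τ : ℝ} (hτ : 0 < τ) (hover : ∀ y : V, (({z ∈ Z | y ∈ gball G z r}).ncard : ℝ) ≤ b)
    {W : Finset V} (hWZ : ↑W ⊆ Z) {u : V → ℝ} (hu : ∀ x ∈ A, 0 < u x)
    (hbad : ∀ z ∈ W, ∀ x ∈ A, x ∈ gball G z r → τ < 1 / u x) (F : V → ℝ) :
    ∑ z ∈ W, ∑ x ∈ A with x ∈ gball G z r, F x ^ 2 ≤ b / τ * ∑ x ∈ A, F x ^ 2 / u x := by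
  calc ∑ z ∈ W, ∑ x ∈ A with x ∈ gball G z r, F x ^ 2
      ≤ ∑ z ∈ W, ∑ x ∈ A with x ∈ gball G z r, F x ^ 2 / u x / τ := by
        refine sum_le_sum fun z hz => sum_le_sum fun x hx => ?_
        obtain ⟨hxA, hxz⟩ := mem_filter.1 hx
        have hux := hu x hxA
        have hτu : τ * u x < 1 := by
          simpa [← lt_div_iff₀ hux] using hbad z hz x hxA hxz
        rw [div_div, le_div_iff₀ (by positivity)]
        nlinarith [sq_nonneg (F x)]
    _ ≤ b * ∑ x ∈ A, F x ^ 2 / u x / τ :=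
        sum_sum_filter_le_mul_sum (fun x hx => by have := hu x hx; positivity)
          fun x _ => hvol.card_filter_mem_gball_le hcL hover hWZ x
    _ = b / τ * ∑ x ∈ A, F x ^ 2 / u x := by rw [← sum_div]; ring

def goodCenters (G : SimpleGraph V) (u : V → ℝ) (A : Finset V) (Z : Set V) (r τ : ℝ) : Set V :=
  {z ∈ Z | ∃ x ∈ A, x ∈ gball G z r ∧ 1 / u x ≤ τ}

theorem sum_sq_le_mul_sum_mul_HAop (hvol : VolCtrl G α cL cU) (hcL : 0 < cL) (hcU : 0 ≤ cU)
    (hpi : WeakPI G CP lam) (hCP : 0 ≤ CP) (hlam : 0 ≤ lam) (hb : 0 ≤ b)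
    (hdeg : ∀ x, 0 < ndeg G x) {μ : V → V → ℝ} {Vpot : V → ℝ} (hμ : BondWeights G μ)
    (hV : ∀ x, 0 ≤ Vpot x) {u : V → ℝ} (hu : IsLandscape G μ Vpot A u) {Z : Set V} {r τ : ℝ}
    (hr : 0 < r) (hτ : 0 < τ) (hZ : IsCover G Z r b) (hF : ∀ y ∉ A, F y = 0)
    (hmean : ∀ z ∈ goodCenters G u A Z r τ,
      ∑ x ∈ A with x ∈ gball G z r, F x * ndeg G x = 0) :
    ∑ x ∈ A, F x ^ 2 ≤ (b / τ + 4 * CP * (b * cU * (lam + 1) ^ α / cL) * r ^ 2) *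
      ∑ x ∈ A, F x * HAop G μ Vpot ↑A F x := by
  obtain ⟨hcov, hover⟩ := hZ
  set W := (hvol.finite_centers hcL A Z r).toFinset
  have hWZ : ∀ (P : V → Prop) [DecidablePred P], ↑({z ∈ W | P z} : Finset V) ⊆ Z :=
    fun _ _ => (coe_subset.2 (filter_subset _ W)).trans fun z hz => by
      simpa [W] using (Set.Finite.mem_toFinset _).1 hz |>.1
  obtain ⟨T, hAT, hnbr⟩ := hvol.exists_superset_neighbors hcL A
  have hcover : ∑ x ∈ A, F x ^ 2 ≤ ∑ z ∈ W, ∑ x ∈ A with x ∈ gball G z r, F x ^ 2 :=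
    sum_le_sum_sum_filter_of_cover (fun _ _ => sq_nonneg _) fun x hx => by
      obtain ⟨z, hzZ, hxz⟩ := hcov x
      exact ⟨z, by simpa [W] using ⟨hzZ, x, hx, hxz⟩, hxz⟩
  rw [← sum_filter_add_sum_filter_not W (· ∈ goodCenters G u A Z r τ)] at hcover
  have hgood := sum_sum_sq_le_pairEnergy hvol hcL hcU hpi hCP hlam hb hdeg hr hover hAT hnbr hF
    (hWZ _) fun z hz => hmean z (mem_filter.1 hz).2
  have hbad := sum_sum_sq_le_of_lt_inv (W := {z ∈ W | z ∉ goodCenters G u A Z r τ}) hvol hcL hτ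
    hover (hWZ _) hu.1
    (fun z hz x hxA hxz => lt_of_not_ge fun hle => (mem_filter.1 hz).2
      ⟨hWZ _ (mem_coe.2 hz), x, hxA, hxz, hle⟩) F
  have henergy := pairEnergy_le_four_mul_sum_mul_HAop hμ hV hAT hnbr hF
  have hground := hu.sum_sq_div_le_sum_mul_HAop hμ F
  calc ∑ x ∈ A, F x ^ 2
      ≤ CP * (b * cU * (lam + 1) ^ α / cL) * r ^ 2 * pairEnergy G ↑T F +
          b / τ * ∑ x ∈ A, F x ^ 2 / u x := hcover.trans (add_le_add hgood hbad)
    _ ≤ CP * (b * cU * (lam + 1) ^ α / cL) * r ^ 2 * (4 * ∑ x ∈ A, F x * HAop G μ Vpot ↑A F x) +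
          b / τ * ∑ x ∈ A, F x * HAop G μ Vpot ↑A F x := by gcongr
    _ = _ := by ring

end Covering

noncomputable def landscapeConst (α cL cU CP lam b : ℝ) : ℝ :=
  2 * (b + 4 * CP * (b * cU * (lam + 1) ^ α / cL))

theorem lt_dotProduct_HAmat_mulVec {α cL cU CP lam b : ℝ} (hvol : VolCtrl G α cL cU)
    (hcL : 0 < cL) (hcU : 0 ≤ cU) (hpi : WeakPI G CP lam) (hCP : 0 ≤ CP) (hlam : 0 ≤ lam)
    (hb : 0 ≤ b) (hdeg : ∀ x, 0 < ndeg G x) {μ : V → V → ℝ} {Vpot : V → ℝ}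
    (hμ : BondWeights G μ) (hV : ∀ x, 0 ≤ Vpot x) {A : Finset V} {u : V → ℝ}
    (hu : IsLandscape G μ Vpot A u) {E r : ℝ} (hE : 0 < E) (hr : 0 < r)
    (hrE : landscapeConst α cL cU CP lam b * E * r ^ 2 = 1) {Z : Set V} (hZ : IsCover G Z r b)
    {f : A → ℝ} (hf : f ≠ 0)
    (hmean : ∀ z ∈ goodCenters G u A Z r (landscapeConst α cL cU CP lam b * E),
      ∑ x : A, (if ↑x ∈ gball G z r then ndeg G x else 0) * f x = 0) :
    E * (f ⬝ᵥ f) < f ⬝ᵥ (HAmat G μ Vpot A *ᵥ f) := by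
  set C := landscapeConst α cL cU CP lam b
  set F := Function.extend Subtype.val f 0
  have hCE : 0 < C * E := pos_of_mul_pos_left (hrE ▸ one_pos) (sq_nonneg r)
  have hF : ∀ y ∉ A, F y = 0 := fun y hy =>
    Function.extend_apply' _ _ _ fun ⟨x, hx⟩ => hy (hx ▸ x.2)
  have hcover := sum_sq_le_mul_sum_mul_HAop hvol hcL hcU hpi hCP hlam hb hdeg hμ hV hu hr hCE hZ
    hF fun z hz => by
      rw [← hmean z hz, sum_filter,
        sum_coe_sort_extend f fun x a => (if x ∈ gball G z r then ndeg G x else 0) * a]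
      exact sum_congr rfl fun x _ => by split_ifs <;> ring
  have hcoef : b / (C * E) + 4 * CP * (b * cU * (lam + 1) ^ α / cL) * r ^ 2 = 1 / (2 * E) := by
    have hb' : b / (C * E) = b * r ^ 2 := by
      rw [div_eq_iff hCE.ne']
      linear_combination (-b) * hrE
    rw [hb', eq_div_iff (by positivity)]
    simp only [C, landscapeConst] at hrE
    linear_combination hrE
  have hnorm : f ⬝ᵥ f = ∑ x ∈ A, F x ^ 2 := by
    simp only [dotProduct, sq]
    exact sum_coe_sort_extend f fun _ a => a * a
  have hpos : 0 < ∑ x ∈ A, F x ^ 2 := by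
    obtain ⟨x, hx⟩ := Function.ne_iff.1 hf
    refine sum_pos' (fun _ _ => sq_nonneg _) ⟨x, x.2, ?_⟩
    have hx : f x ≠ 0 := hx
    rw [show F x = f x from Subtype.val_injective.extend_apply _ _ _]
    positivity
  rw [hcoef, one_div, inv_mul_eq_div, le_div_iff₀ (by positivity)] at hcover
  rw [hnorm, dotProduct_HAmat_mulVec]
  nlinarith

theorem landscape_law_upper_general
    {V : Type*} [Infinite V]
    (G : SimpleGraph V) (hconn : G.Connected)
    (α cL cU CP lam b : ℝ)
    (hcL : 0 < cL) (hcU : 0 < cU) (hCP : 0 < CP) (hlam : 1 ≤ lam) (hb : 1 ≤ b)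
    (hvol : VolCtrl G α cL cU) (hpi : WeakPI G CP lam) :
    ∃ C : ℝ, 0 < C ∧
      ∀ (A : Finset V), A.Nonempty →
        ∀ (μ : V → V → ℝ) (Vpot : V → ℝ), BondWeights G μ → (∀ x, 0 ≤ Vpot x) →
          ∀ u : V → ℝ, IsLandscape G μ Vpot A u →
            ∀ hM : (HAmat G μ Vpot A).IsHermitian,
              ∀ E : ℝ, 0 < E →
                ∀ Z : Set V, IsCover G Z ((C * E) ^ (-(1 : ℝ) / 2)) b →
                  NA hM E ≤ Nu G u A Z ((C * E) ^ (-(1 : ℝ) / 2)) (C * E) := by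
  have hC : 0 < landscapeConst α cL cU CP lam b := by unfold landscapeConst; positivity
  refine ⟨landscapeConst α cL cU CP lam b, hC, fun A _ μ Vpot hμ hV u hu hM E hE Z hZ => ?_⟩
  set C := landscapeConst α cL cU CP lam b
  set r := (C * E) ^ (-(1 : ℝ) / 2)
  have hCE : 0 < C * E := by positivity
  have hrE : C * E * r ^ 2 = 1 := by
    rw [← Real.rpow_natCast, ← Real.rpow_mul hCE.le, show -(1 : ℝ) / 2 * (2 : ℕ) = -1 by norm_num,
      Real.rpow_neg_one, mul_inv_cancel₀ hCE.ne']
  have hgood : (goodCenters G u A Z r (C * E)).Finite :=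
    (hvol.finite_centers hcL A Z r).subset fun z ⟨hz, x, hx, hxz, _⟩ => ⟨hz, x, hx, hxz⟩
  let K : Matrix hgood.toFinset A ℝ := fun z x => if (x : V) ∈ gball G z r then ndeg G x else 0
  have hcount := hM.card_eigenvalues_le_le_finrank E K.mulVecLin fun f hKf hf =>
    lt_dotProduct_HAmat_mulVec hvol hcL hcU.le hpi hCP.le (by linarith) (by linarith)
      (hvol.ndeg_pos hcL hconn) hμ hV hu hE (by positivity) hrE hZ hf fun z hz =>
        congrFun hKf ⟨z, hgood.mem_toFinset.2 hz⟩
  rw [Module.finrank_fintype_fun_eq_card, Fintype.card_coe, ← Set.ncard_eq_toFinset_card _ hgood]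
    at hcount
  unfold NA Nu
  gcongr
  exact_mod_cast hcount

/-- **Landscape Law, upper bound** (Theorem 1.2(i)).  There is a constant `C`, depending only
on the graph data `α, cL, cU, CP, lam` and the overlap constant `b`, such that for every finite
nonempty `A`, all admissible bond weights and potentials, every `E > 0` and every covering of
`𝕍` by balls of radius `(C·E)^{-1/2}` with finite overlap constant `b`,
`N^A(E) ≤ N_u^{𝒫,A}(C·E)`. -/
theorem landscape_law_upper
    {V : Type*} [Countable V] [Infinite V]
    (G : SimpleGraph V) (hconn : G.Connected)
    (α cL cU CP lam b : ℝ)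
    (hα : 1 ≤ α) (hcL : 0 < cL) (hcU : 0 < cU) (hCP : 0 < CP) (hlam : 1 ≤ lam) (hb : 1 ≤ b)
    (hvol : VolCtrl G α cL cU) (hpi : WeakPI G CP lam) :
    ∃ C : ℝ, 0 < C ∧
      ∀ (A : Finset V), A.Nonempty →
        ∀ (μ : V → V → ℝ) (Vpot : V → ℝ), BondWeights G μ → (∀ x, 0 ≤ Vpot x) →
          ∀ u : V → ℝ, IsLandscape G μ Vpot A u →
            ∀ hM : (HAmat G μ Vpot A).IsHermitian,
              ∀ E : ℝ, 0 < E →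
                ∀ Z : Set V, IsCover G Z ((C * E) ^ (-(1 : ℝ) / 2)) b →
                  NA hM E ≤ Nu G u A Z ((C * E) ^ (-(1 : ℝ) / 2)) (C * E) :=
  landscape_law_upper_general G hconn α cL cU CP lam b hcL hcU hCP hlam hb hvol hpi

end LandscapeGraph
end

section
/- ε-cutoff lemma (Lemma 3.1): Let Γ be a locally finite graph, R ⊆ 𝕍 a finite subset, μ_{xy} = μ_{yx} ∈ [0,1] for x∼y, and 0 < ε < 1; set μ^ε_{xy} = max(ε, μ_{xy}), deg^R(x) = #{y∈R : y∼x}, and μ_x^R = Σ_{y∈R: y∼x} μ_{xy}. Then for every f: R → ℝ: (1/2)·Σ_{x,y∈R: x∼y} μ^ε_{xy}·(f(x)−f(y))² ≤ (1/2)·Σ_{x,y∈R: x∼y} μ_{xy}·(f(x)−f(y))² + 4ε·(1−ε)^{-1}·Σ_{x∈R} (deg^R(x) − μ_x^R)·f(x)². In particular, taking ε = 1/5: Σ_{x,y∈R: x∼y} (f(x)−f(y))² ≤ 10·[ (1/2)·Σ_{x,y∈R: x∼y} μ_{xy}·(f(x)−f(y))² + Σ_{x∈R} (deg^R(x) − μ_x^R)·f(x)²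 ]. All double sums range over ordered pairs of adjacent vertices of R. -/
open scoped BigOperators

namespace LandscapeGraph

variable {V : Type*}

/-! The cutoff only changes bonds with `μ_{xy} < ε`; there the excess `(ε - μ_{xy})(f x - f y)²`
is at most `ε (1 - μ_{xy}) · 2 (f x² + f y²)`. Summing over ordered pairs and using the symmetry of
`μ`, the total of `(1 - μ_{xy})(f x² + f y²)` is twice `Σ_x (deg^R x - μ^R_x) f x²`.
For `ε = 1/5` the constant `4ε(1-ε)⁻¹` equals `1`, and `μ^ε ≥ ε` gives the second claim. -/

lemma max_mul_sub_sq_le {ε m : ℝ} (hε0 : 0 ≤ ε) (hε1 : ε < 1) (hm0 : 0 ≤ m) (hm1 : m ≤ 1)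
    (a b : ℝ) :
    max ε m * (a - b) ^ 2 ≤ m * (a - b) ^ 2 + 2 * ε * (1 - ε)⁻¹ * ((1 - m) * (a ^ 2 + b ^ 2)) := by
  rcases le_total ε m with hεm | hmε
  · rw [max_eq_right hεm, le_add_iff_nonneg_right]
    have : 0 < 1 - ε := by linarith
    have : 0 ≤ 1 - m := by linarith
    positivity
  have hinv : 1 ≤ (1 - ε)⁻¹ := (one_le_inv₀ (by linarith)).2 (by linarith)
  calc max ε m * (a - b) ^ 2 = m * (a - b) ^ 2 + (ε - m) * (a - b) ^ 2 := by
        rw [max_eq_left hmε]; ring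
    _ ≤ m * (a - b) ^ 2 + ε * (1 - m) * (2 * (a ^ 2 + b ^ 2)) := by
        gcongr
        · nlinarith
        · nlinarith [sq_nonneg (a + b)]
    _ = m * (a - b) ^ 2 + 2 * ε * 1 * ((1 - m) * (a ^ 2 + b ^ 2)) := by ring
    _ ≤ m * (a - b) ^ 2 + 2 * ε * (1 - ε)⁻¹ * ((1 - m) * (a ^ 2 + b ^ 2)) := by
        gcongr

section Sums

open Finset

variable (G : SimpleGraph V) [DecidableRel G.Adj] (R : Finset V)

lemma sum_adj_comm {M : Type*} [AddCommMonoid M] (F : V → V → M) :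
    ∑ x ∈ R, ∑ y ∈ R with G.Adj x y, F x y = ∑ x ∈ R, ∑ y ∈ R with G.Adj x y, F y x := by
  simp only [sum_filter]
  rw [sum_comm]
  simp only [G.adj_comm]

variable {G} {μ : V → V → ℝ}

lemma sum_adj_one_sub_mul_sq_add_sq (hμ : BondWeights G μ) (f : V → ℝ) :
    ∑ x ∈ R, ∑ y ∈ R with G.Adj x y, (1 - μ x y) * (f x ^ 2 + f y ^ 2) =
      2 * ∑ x ∈ R, ((#{y ∈ R | G.Adj x y} : ℝ) - ∑ y ∈ R with G.Adj x y, μ x y) * f x ^ 2 := by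
  have hswap : ∑ x ∈ R, ∑ y ∈ R with G.Adj x y, (1 - μ x y) * f y ^ 2 =
      ∑ x ∈ R, ∑ y ∈ R with G.Adj x y, (1 - μ x y) * f x ^ 2 := by
    rw [sum_adj_comm]
    refine sum_congr rfl fun x _ => sum_congr rfl fun y hy => ?_
    rw [(hμ x y (mem_filter.1 hy).2).1]
  simp only [mul_add, sum_add_distrib, hswap, ← sum_mul, sum_sub_distrib,
    sum_const, nsmul_eq_mul, mul_one]
  ring

lemma sum_adj_weight_le_card (hμ : BondWeights G μ) (x : V) :
    ∑ y ∈ R with G.Adj x y, μ x y ≤ #{y ∈ R | G.Adj x y} := by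
  simpa using sum_le_card_nsmul _ _ 1 fun y hy => (hμ x y (mem_filter.1 hy).2).2.2

lemma sum_adj_defect_nonneg (hμ : BondWeights G μ) (f : V → ℝ) :
    0 ≤ ∑ x ∈ R, ((#{y ∈ R | G.Adj x y} : ℝ) - ∑ y ∈ R with G.Adj x y, μ x y) * f x ^ 2 :=
  sum_nonneg fun x _ =>
    mul_nonneg (sub_nonneg.2 (sum_adj_weight_le_card R hμ x)) (sq_nonneg _)

theorem sum_adj_max_mul_sq_le (hμ : BondWeights G μ) {ε : ℝ} (hε0 : 0 ≤ ε) (hε1 : ε < 1)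
    (f : V → ℝ) :
    ∑ x ∈ R, ∑ y ∈ R with G.Adj x y, max ε (μ x y) * (f x - f y) ^ 2 ≤
      ∑ x ∈ R, ∑ y ∈ R with G.Adj x y, μ x y * (f x - f y) ^ 2 +
        4 * ε * (1 - ε)⁻¹ *
          ∑ x ∈ R, ((#{y ∈ R | G.Adj x y} : ℝ) - ∑ y ∈ R with G.Adj x y, μ x y) * f x ^ 2 := by
  calc ∑ x ∈ R, ∑ y ∈ R with G.Adj x y, max ε (μ x y) * (f x - f y) ^ 2
      ≤ ∑ x ∈ R, ∑ y ∈ R with G.Adj x y, (μ x y * (f x - f y) ^ 2 +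
          2 * ε * (1 - ε)⁻¹ * ((1 - μ x y) * (f x ^ 2 + f y ^ 2))) := by
        refine sum_le_sum fun x _ => sum_le_sum fun y hy => ?_
        obtain ⟨-, hμ0, hμ1⟩ := hμ x y (mem_filter.1 hy).2
        exact max_mul_sub_sq_le hε0 hε1 hμ0 hμ1 _ _
    _ = ∑ x ∈ R, ∑ y ∈ R with G.Adj x y, μ x y * (f x - f y) ^ 2 + 2 * ε * (1 - ε)⁻¹ *
          ∑ x ∈ R, ∑ y ∈ R with G.Adj x y, (1 - μ x y) * (f x ^ 2 + f y ^ 2) := by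
        simp only [sum_add_distrib, mul_sum]
    _ = _ := by rw [sum_adj_one_sub_mul_sq_add_sq R hμ]; ring

lemma sum_adj_sq_le_inv_mul_sum_max {ε : ℝ} (hε0 : 0 < ε) (f : V → ℝ) :
    ∑ x ∈ R, ∑ y ∈ R with G.Adj x y, (f x - f y) ^ 2 ≤
      ε⁻¹ * ∑ x ∈ R, ∑ y ∈ R with G.Adj x y, max ε (μ x y) * (f x - f y) ^ 2 := by
  rw [mul_sum]
  refine sum_le_sum fun x _ => ?_
  rw [mul_sum]
  refine sum_le_sum fun y _ => ?_
  rw [← mul_assoc]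
  exact le_mul_of_one_le_left (sq_nonneg _) ((le_inv_mul_iff₀ hε0).2 (by simp))

end Sums

theorem eps_cutoff_general
    {V : Type*}
    (G : SimpleGraph V)
    (R : Finset V)
    (μ : V → V → ℝ) (hμ : BondWeights G μ)
    (ε : ℝ) (hε0 : 0 < ε) (hε1 : ε < 1)
    (f : V → ℝ) :
    ((1 / 2) * (∑ᶠ x ∈ (↑R : Set V), ∑ᶠ y ∈ {y ∈ (↑R : Set V) | G.Adj x y},
          max ε (μ x y) * (f x - f y) ^ 2) ≤
        (1 / 2) * (∑ᶠ x ∈ (↑R : Set V), ∑ᶠ y ∈ {y ∈ (↑R : Set V) | G.Adj x y},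
            μ x y * (f x - f y) ^ 2) +
          4 * ε * (1 - ε)⁻¹ *
            ∑ᶠ x ∈ (↑R : Set V),
              ((({y ∈ (↑R : Set V) | G.Adj x y}).ncard : ℝ) -
                  ∑ᶠ y ∈ {y ∈ (↑R : Set V) | G.Adj x y}, μ x y) * f x ^ 2) ∧
      (∑ᶠ x ∈ (↑R : Set V), ∑ᶠ y ∈ {y ∈ (↑R : Set V) | G.Adj x y}, (f x - f y) ^ 2) ≤
        10 * ((1 / 2) * (∑ᶠ x ∈ (↑R : Set V), ∑ᶠ y ∈ {y ∈ (↑R : Set V) | G.Adj x y},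
              μ x y * (f x - f y) ^ 2) +
            ∑ᶠ x ∈ (↑R : Set V),
              ((({y ∈ (↑R : Set V) | G.Adj x y}).ncard : ℝ) -
                  ∑ᶠ y ∈ {y ∈ (↑R : Set V) | G.Adj x y}, μ x y) * f x ^ 2) := by
  classical
  have hfilter (x : V) : {y ∈ (↑R : Set V) | G.Adj x y} = ↑{y ∈ R | G.Adj x y} :=
    (Finset.coe_filter _ _).symm
  simp only [hfilter, finsum_mem_coe_finset, Set.ncard_coe_finset]
  have hdefect := sum_adj_defect_nonneg R hμ f
  have hcutoff := sum_adj_max_mul_sq_le R hμ hε0.le hε1 f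
  have hfifth := sum_adj_max_mul_sq_le R hμ (ε := 1 / 5) (by norm_num) (by norm_num) f
  have hlower := sum_adj_sq_le_inv_mul_sum_max (G := G) R (μ := μ) (ε := 1 / 5) (by norm_num) f
  have hcoeff : 0 ≤ 4 * ε * (1 - ε)⁻¹ := by
    have := sub_pos.2 hε1
    positivity
  have hpenalty := mul_nonneg hcoeff hdefect
  norm_num at hfifth hlower
  exact ⟨by linarith, by linarith⟩

/-- **`ε`-cutoff lemma** (Lemma 3.1).  With `μ^ε_{xy} = max ε μ_{xy}`,
`deg^R(x)` the number of neighbors of `x` in `R`, and `μ_x^R = Σ_{y∈R, y∼x} μ_{xy}`,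
one has the truncation inequality, and (for `ε = 1/5`) its consequence with constant `10`. -/
theorem eps_cutoff
    {V : Type*}
    (G : SimpleGraph V) (hlf : ∀ x : V, (G.neighborSet x).Finite)
    (R : Finset V)
    (μ : V → V → ℝ) (hμ : BondWeights G μ)
    (ε : ℝ) (hε0 : 0 < ε) (hε1 : ε < 1)
    (f : V → ℝ) :
    ((1 / 2) * (∑ᶠ x ∈ (↑R : Set V), ∑ᶠ y ∈ {y ∈ (↑R : Set V) | G.Adj x y},
          max ε (μ x y) * (f x - f y) ^ 2) ≤
        (1 / 2) * (∑ᶠ x ∈ (↑R : Set V), ∑ᶠ y ∈ {y ∈ (↑R : Set V) | G.Adj x y},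
            μ x y * (f x - f y) ^ 2) +
          4 * ε * (1 - ε)⁻¹ *
            ∑ᶠ x ∈ (↑R : Set V),
              ((({y ∈ (↑R : Set V) | G.Adj x y}).ncard : ℝ) -
                  ∑ᶠ y ∈ {y ∈ (↑R : Set V) | G.Adj x y}, μ x y) * f x ^ 2) ∧
      (∑ᶠ x ∈ (↑R : Set V), ∑ᶠ y ∈ {y ∈ (↑R : Set V) | G.Adj x y}, (f x - f y) ^ 2) ≤
        10 * ((1 / 2) * (∑ᶠ x ∈ (↑R : Set V), ∑ᶠ y ∈ {y ∈ (↑R : Set V) | G.Adj x y},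
              μ x y * (f x - f y) ^ 2) +
            ∑ᶠ x ∈ (↑R : Set V),
              ((({y ∈ (↑R : Set V) | G.Adj x y}).ncard : ℝ) -
                  ∑ᶠ y ∈ {y ∈ (↑R : Set V) | G.Adj x y}, μ x y) * f x ^ 2) :=
  eps_cutoff_general G R μ hμ ε hε0 hε1 f

end LandscapeGraph
end

section
/- Moser–Harnack inequality for the landscape (Corollary 2.9): Let Γ be a locally finite connected graph. Assume: (Exit-time bound) there is c₁ > 0 such that for every z ∈ 𝕍 and real ρ ≥ 1, the function u₀ = (−Δ^{B(z,ρ)})^{-1}𝟙 satisfies u₀(y) ≤ c₁·ρ² for all y ∈ B(z,ρ); (Moser–Harnack for subharmonic functions) there is C_H > 0 such that for every x ∈ 𝕍, real ρ ≥ 1, and every g: 𝕍 → [0,∞) with −Δg(y) ≤ 0 for all y ∈ B(x,2ρ): sup_{y∈B(x,ρ)} g(y)² ≤ (C_H/|B(x,2ρ)|)·Σ_{y∈B(x,2ρ)} g(y)². Then there is a constant c₂, depending only on c₁ and C_H, such that for every x ∈ 𝕍, real r ≥ 1, and every f: 𝕍 → [0,∞) with −Δf(y) ≤ 1 for all y ∈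 B(x,2r): Σ_{y∈B(x,2r)} f(y)² ≥ (2C_H)^{-1}·|B(x,2r)|·( sup_{y∈B(x,r)} f(y)² − c₂·r⁴ ). -/
open scoped BigOperators

namespace LandscapeGraph

variable {V : Type*}

section MHAux

variable {V : Type*} {G : SimpleGraph V}

private lemma mh_cross {s : Set V} {a b : V} (p : G.Walk a b) (ha : a ∈ s) (hb : b ∉ s) :
    ∃ u v, G.Adj u v ∧ u ∈ s ∧ v ∉ s := by
  revert ha hb
  induction p with
  | nil => intro ha hb; exact absurd ha hb
  | @cons u c d h q ih =>
      intro ha hb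
      by_cases hc : c ∈ s
      · exact ih hc hb
      · exact ⟨u, c, h, ha, hc⟩

private lemma mh_ball_finite (hlf : ∀ x : V, (G.neighborSet x).Finite) (x : V) (r : ℝ) :
    (gball G x r).Finite := by
  have key : ∀ n : ℕ, {y : V | G.Reachable x y ∧ G.dist x y ≤ n}.Finite := by
    intro n
    induction n with
    | zero =>
        apply Set.Finite.subset (Set.finite_singleton x)
        rintro y ⟨hre, hd⟩
        obtain ⟨p, hp⟩ := hre.exists_walk_length_eq_dist
        have hp0 : p.length = 0 := by omega
        exact Set.mem_singleton_iff.mpr (SimpleGraph.Walk.eq_of_length_eq_zero hp0).symm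
    | succ n ih =>
        apply Set.Finite.subset
          (Set.Finite.biUnion ih (fun z _ => (Set.finite_singleton z).union (hlf z)))
        rintro y ⟨hre, hd⟩
        by_cases hle : G.dist x y ≤ n
        · exact Set.mem_biUnion ⟨hre, hle⟩ (Or.inl rfl)
        · obtain ⟨p, hp⟩ := hre.exists_walk_length_eq_dist
          have hxy : y ≠ x := by
            rintro rfl
            rw [SimpleGraph.dist_self] at hle
            omega
          obtain ⟨z, hadj, q, hpq⟩ := SimpleGraph.Walk.exists_eq_cons_of_ne hxy p.reverse
          have hql : q.length = n := by
            have h1 := congrArg SimpleGraph.Walk.length hpq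
            rw [SimpleGraph.Walk.length_reverse, SimpleGraph.Walk.length_cons] at h1
            omega
          have hdz : G.dist x z ≤ n := by
            have := SimpleGraph.dist_le q.reverse
            rwa [SimpleGraph.Walk.length_reverse, hql] at this
          refine Set.mem_biUnion (⟨⟨q.reverse⟩, hdz⟩ :
            z ∈ {y : V | G.Reachable x y ∧ G.dist x y ≤ n}) ?_
          exact Or.inr (by exact hadj.symm)
  by_cases hr : 0 ≤ r
  · apply (key ⌊r⌋₊).subset
    rintro y ⟨hre, hd⟩
    exact ⟨hre, Nat.le_floor hd⟩
  · apply Set.Finite.subset Set.finite_empty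
    rintro y ⟨-, hd⟩
    exact absurd (le_trans (Nat.cast_nonneg _) hd) hr

private lemma mh_lap_eq (hlf : ∀ x : V, (G.neighborSet x).Finite) (f : V → ℝ) (y : V) :
    lap G f y = ∑ z ∈ (hlf y).toFinset, (f z - f y) := by
  rw [lap, ← finsum_mem_coe_finset, Set.Finite.coe_toFinset]

private lemma mh_ndeg_eq (hlf : ∀ x : V, (G.neighborSet x).Finite) (y : V) :
    ndeg G y = (((hlf y).toFinset.card : ℕ) : ℝ) := by
  rw [ndeg, ← Set.ncard_coe_finset, Set.Finite.coe_toFinset]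

private lemma mh_bsup_le {α : Type*} {s : Set α} {F : α → ℝ} {M : ℝ} (hM : 0 ≤ M)
    (h : ∀ y ∈ s, F y ≤ M) : (⨆ y ∈ s, F y) ≤ M :=
  Real.iSup_le (fun y => Real.iSup_le (fun hy => h y hy) hM) hM

private lemma mh_le_bsup {α : Type*} {s : Set α} (hs : s.Finite) {F : α → ℝ} {a : α}
    (ha : a ∈ s) : F a ≤ ⨆ y ∈ s, F y := by
  have hne : hs.toFinset.Nonempty := ⟨a, hs.mem_toFinset.mpr ha⟩
  set M := max 0 (hs.toFinset.sup' hne F) with hM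
  have hbdd : ∀ y : α, (⨆ _ : y ∈ s, F y) ≤ M := by
    intro y
    refine Real.iSup_le (fun hy => ?_) (le_max_left _ _)
    exact le_trans (Finset.le_sup' F (hs.mem_toFinset.mpr hy)) (le_max_right _ _)
  have h1 : F a = ⨆ _ : a ∈ s, F a := by
    haveI : Nonempty (a ∈ s) := ⟨ha⟩
    exact ciSup_const.symm
  rw [h1]
  exact le_ciSup ⟨M, by rintro _ ⟨y, rfl⟩; exact hbdd y⟩ a

open Classical in
private lemma mh_lap_eq_univ [Fintype V] (G : SimpleGraph V) (f : V → ℝ) (y : V) :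
    lap G f y = ∑ z ∈ Finset.univ, (if G.Adj y z then f z - f y else 0) := by
  classical
  have hset : (Set.toFinite (G.neighborSet y)).toFinset
      = Finset.univ.filter (fun z => G.Adj y z) := by
    ext z
    simp [SimpleGraph.mem_neighborSet]
  rw [mh_lap_eq (fun x => Set.toFinite _) f y, hset, ← Finset.sum_filter]

open Classical in
private lemma mh_antisym [Fintype V] (G : SimpleGraph V) (f : V → ℝ) (S : Finset V) :
    ∑ y ∈ S, ∑ z ∈ S, (if G.Adj y z then f z - f y else 0) = 0 := by
  classical
  have h1 : ∑ y ∈ S, ∑ z ∈ S, (if G.Adj y z then f z - f y else 0)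
      = ∑ z ∈ S, ∑ y ∈ S, (if G.Adj y z then f z - f y else 0) := Finset.sum_comm
  have h3 : ∀ y z : V, (if G.Adj z y then f y - f z else 0)
      = -(if G.Adj y z then f z - f y else 0) := by
    intro y z
    by_cases h : G.Adj y z
    · rw [if_pos h, if_pos h.symm]; ring
    · rw [if_neg h, if_neg (fun hc => h hc.symm)]; ring
  have h4 : ∑ z ∈ S, ∑ y ∈ S, (if G.Adj y z then f z - f y else 0)
      = -∑ y ∈ S, ∑ z ∈ S, (if G.Adj y z then f z - f y else 0) := by
    calc ∑ z ∈ S, ∑ y ∈ S, (if G.Adj y z then f z - f y else 0)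
        = ∑ y ∈ S, ∑ z ∈ S, (if G.Adj z y then f y - f z else 0) := rfl
      _ = ∑ y ∈ S, ∑ z ∈ S, -(if G.Adj y z then f z - f y else 0) := by
          exact Finset.sum_congr rfl fun y _ => Finset.sum_congr rfl fun z _ => h3 y z
      _ = -∑ y ∈ S, ∑ z ∈ S, (if G.Adj y z then f z - f y else 0) := by
          simp [Finset.sum_neg_distrib]
  linarith [h1.trans h4]

open Classical in
private lemma mh_flux [Fintype V] (G : SimpleGraph V) (f : V → ℝ) (S : Finset V) :
    ∑ y ∈ S, lap G f y
      = ∑ y ∈ S, ∑ z ∈ Finset.univ \ S, (if G.Adj y z then f z - f y else 0) := by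
  classical
  have h1 : ∀ y, lap G f y
      = (∑ z ∈ Finset.univ \ S, (if G.Adj y z then f z - f y else 0))
        + ∑ z ∈ S, (if G.Adj y z then f z - f y else 0) := by
    intro y
    rw [mh_lap_eq_univ G f y, ← Finset.sum_sdiff (Finset.subset_univ S)]
  calc ∑ y ∈ S, lap G f y
      = ∑ y ∈ S, ((∑ z ∈ Finset.univ \ S, (if G.Adj y z then f z - f y else 0))
        + ∑ z ∈ S, (if G.Adj y z then f z - f y else 0)) :=
        Finset.sum_congr rfl fun y _ => h1 y
    _ = (∑ y ∈ S, ∑ z ∈ Finset.univ \ S, (if G.Adj y z then f z - f y else 0))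
        + ∑ y ∈ S, ∑ z ∈ S, (if G.Adj y z then f z - f y else 0) := Finset.sum_add_distrib
    _ = ∑ y ∈ S, ∑ z ∈ Finset.univ \ S, (if G.Adj y z then f z - f y else 0) := by
        rw [mh_antisym G f S, add_zero]

open Classical in
private lemma mh_osc [Fintype V] (G : SimpleGraph V) (hconn : G.Connected) (f : V → ℝ)
    (hf : ∀ y, -lap G f y ≤ 1) (a y : V) :
    f a - (Fintype.card V : ℝ) ^ 2 ≤ f y := by
  classical
  set n : ℕ := Fintype.card V with hn
  have key : ∀ k : ℕ, ∀ S : Finset V, S.Nonempty →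
      (∀ u ∈ S, ∀ v : V, f u ≤ f v → v ∈ S) → (Finset.univ \ S).card ≤ k →
      ∀ t : ℝ, (∀ u ∈ S, t ≤ f u) → ∀ y : V, t - (k : ℝ) * n ≤ f y := by
    intro k
    induction k with
    | zero =>
        intro S hne hup hcard t ht y
        have hSu : y ∈ S := by
          have h0 : (Finset.univ \ S) = ∅ :=
            Finset.card_eq_zero.mp (le_antisymm hcard (Nat.zero_le _))
          have h2 : (Finset.univ : Finset V) ⊆ S := Finset.sdiff_eq_empty_iff_subset.mp h0
          exact h2 (Finset.mem_univ y)
        have := ht y hSu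
        simp only [Nat.cast_zero, zero_mul, sub_zero]
        linarith
    | succ k ih =>
        intro S hne hup hcard t ht y
        have hn0 : (0:ℝ) ≤ (n:ℝ) := Nat.cast_nonneg n
        by_cases hy : y ∈ S
        · have hkn : (0:ℝ) ≤ ((k+1 : ℕ) : ℝ) * n := by positivity
          linarith [ht y hy]
        · obtain ⟨a₀, ha₀⟩ := hne
          obtain ⟨p⟩ := hconn a₀ y
          obtain ⟨u, v, huv, huS, hvS⟩ :=
            mh_cross (s := (↑S : Set V)) p (Finset.mem_coe.mpr ha₀) (by simpa using hy)
          have huS' : u ∈ S := Finset.mem_coe.mp huS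
          have hvS' : v ∉ S := fun hc => hvS (Finset.mem_coe.mpr hc)
          -- flux bound
          have hlb : -(S.card : ℝ) ≤ ∑ w ∈ S, lap G f w := by
            have hterm : ∀ w ∈ S, (-1 : ℝ) ≤ lap G f w := fun w _ => by linarith [hf w]
            calc -(S.card : ℝ) = ∑ _w ∈ S, (-1 : ℝ) := by
                  rw [Finset.sum_const, nsmul_eq_mul]; ring
              _ ≤ _ := Finset.sum_le_sum hterm
          have hpos : ∀ y' ∈ S, ∀ z ∈ Finset.univ \ S,
              (0:ℝ) ≤ (if G.Adj y' z then f y' - f z else 0) := by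
            intro y' hy' z hz
            by_cases h : G.Adj y' z
            · rw [if_pos h]
              have hzS : z ∉ S := (Finset.mem_sdiff.mp hz).2
              have hlt : ¬ f y' ≤ f z := fun hle => hzS (hup y' hy' z hle)
              linarith [lt_of_not_ge hlt]
            · rw [if_neg h]
          have hsum_eq : ∑ y' ∈ S, ∑ z ∈ Finset.univ \ S, (if G.Adj y' z then f y' - f z else 0)
              = -∑ y' ∈ S, ∑ z ∈ Finset.univ \ S, (if G.Adj y' z then f z - f y' else 0) := by
            rw [← Finset.sum_neg_distrib]
            refine Finset.sum_congr rfl fun y' _ => ?_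
            rw [← Finset.sum_neg_distrib]
            refine Finset.sum_congr rfl fun z _ => ?_
            by_cases h : G.Adj y' z
            · rw [if_pos h, if_pos h]; ring
            · rw [if_neg h, if_neg h]; ring
          have hsum_le : ∑ y' ∈ S, ∑ z ∈ Finset.univ \ S,
              (if G.Adj y' z then f y' - f z else 0) ≤ (S.card : ℝ) := by
            rw [hsum_eq, ← mh_flux G f S]
            linarith [hlb]
          have hv' : v ∈ Finset.univ \ S :=
            Finset.mem_sdiff.mpr ⟨Finset.mem_univ v, hvS'⟩
          have hterm_uv : f u - f v ≤ (S.card : ℝ) := by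
            have h2 : (if G.Adj u v then f u - f v else 0)
                ≤ ∑ z ∈ Finset.univ \ S, (if G.Adj u z then f u - f z else 0) :=
              Finset.single_le_sum (fun z hz => hpos u huS' z hz) hv'
            have h3 : ∑ z ∈ Finset.univ \ S, (if G.Adj u z then f u - f z else 0)
                ≤ ∑ y' ∈ S, ∑ z ∈ Finset.univ \ S, (if G.Adj y' z then f y' - f z else 0) :=
              Finset.single_le_sum
                (fun y' hy' => Finset.sum_nonneg (fun z hz => hpos y' hy' z hz)) huS'
            rw [if_pos huv] at h2
            linarith
          have hcn : (S.card : ℝ) ≤ (n : ℝ) := by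
            exact_mod_cast Finset.card_le_univ S
          -- enlarge S
          set S' := S ∪ Finset.univ.filter (fun z => f v ≤ f z) with hS'
          have hvs' : v ∈ S' :=
            Finset.mem_union_right _ (Finset.mem_filter.mpr ⟨Finset.mem_univ v, le_refl _⟩)
          have hsub : S ⊆ S' := Finset.subset_union_left
          have hup' : ∀ u' ∈ S', ∀ w : V, f u' ≤ f w → w ∈ S' := by
            intro u' hu' w hw
            rcases Finset.mem_union.mp hu' with h | h
            · exact hsub (hup u' h w hw)
            · exact Finset.mem_union_right _
                (Finset.mem_filter.mpr
                  ⟨Finset.mem_univ w, le_trans (Finset.mem_filter.mp h).2 hw⟩)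
          have hcard' : (Finset.univ \ S').card ≤ k := by
            have hss : Finset.univ \ S' ⊆ (Finset.univ \ S).erase v := by
              intro w hw
              rw [Finset.mem_erase]
              rcases Finset.mem_sdiff.mp hw with ⟨hw1, hw2⟩
              exact ⟨fun hc => hw2 (hc ▸ hvs'), Finset.mem_sdiff.mpr
                ⟨hw1, fun hc => hw2 (hsub hc)⟩⟩
            have h5 := Finset.card_le_card hss
            rw [Finset.card_erase_of_mem hv'] at h5
            omega
          have ht' : ∀ u' ∈ S', t - (n:ℝ) ≤ f u' := by
            intro u' hu'
            rcases Finset.mem_union.mp hu' with h | h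
            · linarith [ht u' h]
            · have hfv : f v ≤ f u' := (Finset.mem_filter.mp h).2
              have htu : t ≤ f u := ht u huS'
              linarith
          have := ih S' ⟨v, hvs'⟩ hup' hcard' (t - n) ht' y
          have hc : ((k+1 : ℕ) : ℝ) = (k : ℝ) + 1 := by push_cast; ring
          rw [hc]
          linarith
  -- apply with the up-set of a
  have hane : a ∈ Finset.univ.filter (fun z => f a ≤ f z) :=
    Finset.mem_filter.mpr ⟨Finset.mem_univ a, le_refl _⟩
  have happ := key n (Finset.univ.filter (fun z => f a ≤ f z)) ⟨a, hane⟩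
    (fun u hu w hw => Finset.mem_filter.mpr
      ⟨Finset.mem_univ w, le_trans (Finset.mem_filter.mp hu).2 hw⟩)
    (by
      calc (Finset.univ \ Finset.univ.filter (fun z => f a ≤ f z)).card
          ≤ (Finset.univ : Finset V).card := Finset.card_le_card (Finset.sdiff_subset)
        _ = n := by rw [Finset.card_univ])
    (f a) (fun u hu => (Finset.mem_filter.mp hu).2) y
  have hsq : ((n:ℝ)) * (n:ℝ) = ((n:ℕ):ℝ)^2 := by ring
  calc f a - ((Fintype.card V : ℕ) : ℝ)^2 = f a - (n:ℝ) * n := by rw [hsq]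
    _ ≤ f y := happ

open Classical in
private lemma mh_sum_conv {Bfin : Finset V} (G : SimpleGraph V) (u : ↥Bfin → ℝ) (U : V → ℝ)
    (hU : ∀ z : ↥Bfin, U ↑z = u z) (a : V) :
    ∑ z ∈ Finset.univ.filter (fun z : ↥Bfin => G.Adj a ↑z), u z
      = ∑ z ∈ Bfin.filter (fun z => G.Adj a z), U z := by
  classical
  rw [Finset.sum_filter, Finset.sum_filter,
    ← Finset.sum_coe_sort Bfin (fun w => if G.Adj a w then U w else 0)]
  exact Finset.sum_congr rfl fun z _ => by rw [hU z]

end MHAux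

set_option maxHeartbeats 1600000 in
/-- **Moser–Harnack inequality for the landscape** (Corollary 2.9).  Assuming an exit-time
upper bound for the Dirichlet landscape of balls and a Moser–Harnack inequality for
nonnegative subharmonic functions, every `f ≥ 0` with `-Δf ≤ 1` on `B(x,2r)` satisfies
`Σ_{B(x,2r)} f² ≥ (2C_H)⁻¹ |B(x,2r)| (sup_{B(x,r)} f² - c₂ r⁴)`. -/
theorem moser_harnack_landscape
    {V : Type*}
    (G : SimpleGraph V) (hconn : G.Connected) (hlf : ∀ x : V, (G.neighborSet x).Finite)
    (c₁ CH : ℝ) (hc₁ : 0 < c₁) (hCH : 0 < CH)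
    (hexit : ∀ z : V, ∀ ρ : ℝ, 1 ≤ ρ → ∀ u₀ : V → ℝ,
      (∀ y ∈ gball G z ρ, negDirLap G (gball G z ρ) u₀ y = 1) →
      ∀ y ∈ gball G z ρ, u₀ y ≤ c₁ * ρ ^ 2)
    (hMH : ∀ x : V, ∀ ρ : ℝ, 1 ≤ ρ → ∀ g : V → ℝ, (∀ y, 0 ≤ g y) →
      (∀ y ∈ gball G x (2 * ρ), 0 ≤ lap G g y) →
      (⨆ y ∈ gball G x ρ, g y ^ 2) ≤
        CH / ((gball G x (2 * ρ)).ncard : ℝ) * ∑ᶠ y ∈ gball G x (2 * ρ), g y ^ 2) :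
    ∃ c₂ : ℝ, 0 < c₂ ∧
      ∀ x : V, ∀ r : ℝ, 1 ≤ r → ∀ f : V → ℝ, (∀ y, 0 ≤ f y) →
        (∀ y ∈ gball G x (2 * r), -lap G f y ≤ 1) →
        (2 * CH)⁻¹ * ((gball G x (2 * r)).ncard : ℝ) *
            ((⨆ y ∈ gball G x r, f y ^ 2) - c₂ * r ^ 4) ≤
          ∑ᶠ y ∈ gball G x (2 * r), f y ^ 2 := by
  classical
  refine ⟨32 * CH * c₁ ^ 2 + 2 * (Nat.card V : ℝ) ^ 4 + 1, by positivity, ?_⟩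
  intro x r hr f hf0 hsub
  set c₂ : ℝ := 32 * CH * c₁ ^ 2 + 2 * (Nat.card V : ℝ) ^ 4 + 1 with hc₂def
  have hfin : (gball G x (2 * r)).Finite := mh_ball_finite hlf x (2 * r)
  set Bfin : Finset V := hfin.toFinset with hBdef
  have hBall : ↑Bfin = gball G x (2 * r) := hfin.coe_toFinset
  have hxB : x ∈ gball G x (2 * r) := by
    refine ⟨SimpleGraph.Reachable.refl x, ?_⟩
    rw [SimpleGraph.dist_self]
    push_cast
    linarith
  have hxBf : x ∈ Bfin := hfin.mem_toFinset.mpr hxB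
  have hNpos : (0:ℝ) < (Bfin.card : ℝ) := by
    exact_mod_cast Finset.card_pos.mpr ⟨x, hxBf⟩
  have hxr : x ∈ gball G x r := by
    refine ⟨SimpleGraph.Reachable.refl x, ?_⟩
    rw [SimpleGraph.dist_self]
    push_cast
    linarith
  have hball_r_fin : (gball G x r).Finite := mh_ball_finite hlf x r
  rw [← hBall, Set.ncard_coe_finset, finsum_mem_coe_finset]
  have h2CH : (0:ℝ) < 2 * CH := by linarith
  rw [mul_assoc, inv_mul_le_iff₀ h2CH]
  set Sf : ℝ := ⨆ y ∈ gball G x r, f y ^ 2 with hSfdef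
  set Sumf : ℝ := ∑ y ∈ Bfin, f y ^ 2 with hSumfdef
  set N : ℝ := (Bfin.card : ℝ) with hNdef
  clear_value Sf Sumf N
  by_cases hproper : ∃ w : V, w ∉ Bfin
  · -- proper ball: construct the Dirichlet landscape
    obtain ⟨w, hw⟩ := hproper
    haveI : Nonempty ↥Bfin := ⟨⟨x, hxBf⟩⟩
    set L : (↥Bfin → ℝ) →ₗ[ℝ] (↥Bfin → ℝ) :=
      { toFun := fun u y => ndeg G ↑y * u y
          - ∑ z ∈ Finset.univ.filter (fun z : ↥Bfin => G.Adj ↑y ↑z), u z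
        map_add' := by
          intro u v
          funext y
          simp only [Pi.add_apply, Finset.sum_add_distrib]
          ring
        map_smul' := by
          intro c u
          funext y
          simp only [Pi.smul_apply, smul_eq_mul, RingHom.id_apply, ← Finset.mul_sum]
          ring } with hLdef
    have hLapp : ∀ (u : ↥Bfin → ℝ) (y : ↥Bfin),
        L u y = ndeg G ↑y * u y
          - ∑ z ∈ Finset.univ.filter (fun z : ↥Bfin => G.Adj ↑y ↑z), u z := fun u y => rfl
    have hdegF : ∀ a : V, Bfin.filter (fun z => G.Adj a z) ⊆ (hlf a).toFinset := by
      intro a z hz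
      rw [Set.Finite.mem_toFinset]
      exact (Finset.mem_filter.mp hz).2
    -- maximum principle: kernel is trivial
    have key : ∀ u : ↥Bfin → ℝ, L u = 0 → ∀ y₀ : ↥Bfin, u y₀ ≤ 0 := by
      intro u hLu
      by_contra hcon
      push_neg at hcon
      obtain ⟨y₁, hy₁⟩ := hcon
      have hMne : (Finset.univ : Finset ↥Bfin).Nonempty := Finset.univ_nonempty
      set M : ℝ := Finset.univ.sup' hMne u with hMdef
      have hM : 0 < M := lt_of_lt_of_le hy₁ (Finset.le_sup' u (Finset.mem_univ y₁))
      set U : V → ℝ := fun z => if h : z ∈ Bfin then u ⟨z, h⟩ else 0 with hUdef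
      have hUpos : ∀ (z : V) (hh : z ∈ Bfin), U z = u ⟨z, hh⟩ := by
        intro z hh
        simp only [hUdef]
        exact dif_pos hh
      have hUneg : ∀ z : V, z ∉ Bfin → U z = 0 := by
        intro z hh
        simp only [hUdef]
        exact dif_neg hh
      have hUu : ∀ z : ↥Bfin, U ↑z = u z := fun z => hUpos ↑z z.coe_prop
      clear_value U
      set S : Set V := {z | ∃ h : z ∈ Bfin, u ⟨z, h⟩ = M} with hSdef
      have hSB : ∀ z ∈ S, z ∈ Bfin := by
        rintro z ⟨hz, -⟩
        exact hz
      have hclosed : ∀ a ∈ S, ∀ b : V, G.Adj a b → b ∈ S := by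
        rintro a ⟨haB, haM⟩ b hab
        have heq : ndeg G a * M - ∑ z ∈ Bfin.filter (fun z => G.Adj a z), U z = 0 := by
          have h0 := congrFun hLu ⟨a, haB⟩
          rw [hLapp, mh_sum_conv G u U hUu a] at h0
          rw [← haM]
          exact h0
        set F := Bfin.filter (fun z => G.Adj a z) with hFdef
        have hFsub : F ⊆ (hlf a).toFinset := hdegF a
        have hUleM : ∀ z ∈ F, U z ≤ M := by
          intro z hz
          have hzB : z ∈ Bfin := (Finset.mem_filter.mp hz).1
          rw [hUpos z hzB]
          exact Finset.le_sup' u (Finset.mem_univ _)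
        have hdeg : ndeg G a = (((hlf a).toFinset.card : ℕ) : ℝ) := mh_ndeg_eq hlf a
        have hcardle : ((F.card : ℕ) : ℝ) ≤ (((hlf a).toFinset.card : ℕ) : ℝ) := by
          exact_mod_cast Finset.card_le_card hFsub
        have hle1 : ∑ z ∈ F, U z ≤ ((F.card : ℕ) : ℝ) * M := by
          calc ∑ z ∈ F, U z ≤ ∑ _z ∈ F, M := Finset.sum_le_sum hUleM
            _ = ((F.card : ℕ) : ℝ) * M := by rw [Finset.sum_const, nsmul_eq_mul]
        have hcardeq : ((F.card : ℕ) : ℝ) = (((hlf a).toFinset.card : ℕ) : ℝ) := by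
          nlinarith [heq, hle1, hcardle, hM, hdeg]
        have hFeq : F = (hlf a).toFinset := by
          refine Finset.eq_of_subset_of_card_le hFsub (le_of_eq ?_)
          exact_mod_cast hcardeq.symm
        have hallM : ∀ z ∈ F, U z = M := by
          by_contra hcon2
          push_neg at hcon2
          obtain ⟨z₀, hz₀F, hz₀⟩ := hcon2
          have hlt : U z₀ < M := lt_of_le_of_ne (hUleM z₀ hz₀F) hz₀
          have hstrict : ∑ z ∈ F, U z < ∑ _z ∈ F, M :=
            Finset.sum_lt_sum hUleM ⟨z₀, hz₀F, hlt⟩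
          rw [Finset.sum_const, nsmul_eq_mul] at hstrict
          nlinarith [heq, hdeg, hcardeq]
        have hbF : b ∈ F := by
          rw [hFeq, Set.Finite.mem_toFinset]
          exact hab
        have hbB : b ∈ Bfin := (Finset.mem_filter.mp hbF).1
        refine ⟨hbB, ?_⟩
        have := hallM b hbF
        rwa [hUpos b hbB] at this
      obtain ⟨y₂, hy₂mem, hy₂⟩ := Finset.exists_mem_eq_sup' hMne u
      have hy₂S : (↑y₂ : V) ∈ S := ⟨y₂.coe_prop, by rw [← hy₂, hMdef]⟩
      have hwS : w ∉ S := fun hc => hw (hSB w hc)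
      obtain ⟨p⟩ := hconn ↑y₂ w
      obtain ⟨u', v', huv', hu'S, hv'S⟩ := mh_cross p hy₂S hwS
      exact hv'S (hclosed u' hu'S v' huv')
    have hinj : Function.Injective L := by
      intro u v huv
      have h0 : L (u - v) = 0 := by rw [map_sub, huv, sub_self]
      have h1 := key (u - v) h0
      have h2 := key (-(u - v)) (by rw [map_neg, h0, neg_zero])
      funext y
      have h3 := h1 y
      have h4 := h2 y
      simp only [Pi.sub_apply, Pi.neg_apply] at h3 h4
      have : u y - v y = 0 := by linarith
      linarith
    obtain ⟨u₁, hu₁⟩ := (LinearMap.injective_iff_surjective.mp hinj) (fun _ => (1:ℝ))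
    set U : V → ℝ := fun z => if h : z ∈ Bfin then u₁ ⟨z, h⟩ else 0 with hUdef
    have hUpos : ∀ (z : V) (hh : z ∈ Bfin), U z = u₁ ⟨z, hh⟩ := by
      intro z hh
      simp only [hUdef]
      exact dif_pos hh
    have hUneg : ∀ z : V, z ∉ Bfin → U z = 0 := by
      intro z hh
      simp only [hUdef]
      exact dif_neg hh
    have hUu : ∀ z : ↥Bfin, U ↑z = u₁ z := fun z => hUpos ↑z z.coe_prop
    clear_value U
    have hL1 : ∀ y : ↥Bfin,
        ndeg G ↑y * u₁ y - ∑ z ∈ Bfin.filter (fun z => G.Adj ↑y z), U z = 1 := by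
      intro y
      have h0 := congrFun hu₁ y
      rw [hLapp, mh_sum_conv G u₁ U hUu ↑y] at h0
      exact h0
    -- nonnegativity of the landscape
    have hU0 : ∀ z : V, 0 ≤ U z := by
      intro z
      by_cases h : z ∈ Bfin
      · rw [hUpos z h]
        by_contra hneg
        push_neg at hneg
        haveI : Nonempty ↥Bfin := ⟨⟨z, h⟩⟩
        have hune : (Finset.univ : Finset ↥Bfin).Nonempty := Finset.univ_nonempty
        obtain ⟨y₀, hy₀mem, hy₀⟩ := Finset.exists_mem_eq_inf' hune u₁
        set m : ℝ := Finset.univ.inf' hune u₁ with hmdef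
        have hm : m < 0 := lt_of_le_of_lt (Finset.inf'_le u₁ (Finset.mem_univ ⟨z, h⟩)) hneg
        have heq := hL1 y₀
        set F := Bfin.filter (fun z' => G.Adj (↑y₀) z') with hFdef
        have hsumge : ((F.card : ℕ) : ℝ) * m ≤ ∑ z' ∈ F, U z' := by
          have h1 : ∀ z' ∈ F, m ≤ U z' := by
            intro z' hz'
            have hzB : z' ∈ Bfin := (Finset.mem_filter.mp hz').1
            rw [hUpos z' hzB]
            exact Finset.inf'_le u₁ (Finset.mem_univ _)
          calc ((F.card : ℕ) : ℝ) * m = ∑ _z' ∈ F, m := by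
                rw [Finset.sum_const, nsmul_eq_mul]
            _ ≤ _ := Finset.sum_le_sum h1
        have hdeg : ndeg G ↑y₀ = (((hlf ↑y₀).toFinset.card : ℕ) : ℝ) := mh_ndeg_eq hlf ↑y₀
        have hdegc : ((F.card : ℕ) : ℝ) ≤ ndeg G ↑y₀ := by
          rw [hdeg]
          exact_mod_cast Finset.card_le_card (hdegF ↑y₀)
        have hy₀m : u₁ y₀ = m := hy₀.symm
        nlinarith [heq, hsumge, hdegc, hm, hy₀m]
      · rw [hUneg z h]
    -- Dirichlet equation, hence exit-time bound
    have hdir : ∀ y ∈ gball G x (2*r), negDirLap G (gball G x (2*r)) U y = 1 := by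
      intro y hy
      have hyB : y ∈ Bfin := hfin.mem_toFinset.mpr hy
      rw [negDirLap]
      have hset : {z ∈ gball G x (2*r) | G.Adj y z}
          = ↑(Bfin.filter (fun z => G.Adj y z)) := by
        ext z
        constructor
        · rintro ⟨h1, h2⟩
          exact Finset.mem_coe.mpr (Finset.mem_filter.mpr ⟨hfin.mem_toFinset.mpr h1, h2⟩)
        · intro hz
          have h3 := Finset.mem_filter.mp (Finset.mem_coe.mp hz)
          exact ⟨hfin.mem_toFinset.mp h3.1, h3.2⟩
      rw [hset, finsum_mem_coe_finset]
      have h1 := hL1 ⟨y, hyB⟩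
      rw [hUpos y hyB]
      exact h1
    have hUle : ∀ z ∈ Bfin, U z ≤ c₁ * (2*r)^2 := by
      intro z hz
      exact hexit x (2*r) (by linarith) U hdir z (hfin.mem_toFinset.mp hz)
    set cc : ℝ := c₁ * (2*r)^2 with hccdef
    clear_value cc
    have hcc0 : 0 ≤ cc := by rw [hccdef]; positivity
    have hUleAll : ∀ z : V, U z ≤ cc := by
      intro z
      by_cases h : z ∈ Bfin
      · exact hUle z h
      · rw [hUdef]
        simp only [dif_neg h]
        exact hcc0
    -- the Laplacian of U on the ball
    have hlapU : ∀ y ∈ Bfin, lap G U y = -1 := by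
      intro y hyB
      rw [mh_lap_eq hlf, Finset.sum_sub_distrib, Finset.sum_const, nsmul_eq_mul]
      have hF : ∑ z ∈ (hlf y).toFinset, U z
          = ∑ z ∈ Bfin.filter (fun z => G.Adj y z), U z := by
        refine (Finset.sum_subset (hdegF y) ?_).symm
        intro z hzn hzF
        have hadj : G.Adj y z := by
          rw [Set.Finite.mem_toFinset] at hzn
          exact hzn
        have hzB : z ∉ Bfin := fun hc => hzF (Finset.mem_filter.mpr ⟨hc, hadj⟩)
        exact hUneg z hzB
      rw [hF]
      have h1 := hL1 ⟨y, hyB⟩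
      rw [hUpos y hyB]
      rw [mh_ndeg_eq hlf] at h1
      linarith
    -- the subharmonic comparison function
    set g : V → ℝ := fun z => f z + (cc - U z) with hgdef
    clear_value g
    have hg0 : ∀ z, 0 ≤ g z := by
      intro z
      have := hUleAll z
      have := hf0 z
      simp only [hgdef]
      linarith
    have hgsub : ∀ y ∈ gball G x (2*r), 0 ≤ lap G g y := by
      intro y hy
      have hyB : y ∈ Bfin := hfin.mem_toFinset.mpr hy
      have hlg : lap G g y = lap G f y - lap G U y := by
        rw [mh_lap_eq hlf g, mh_lap_eq hlf f, mh_lap_eq hlf U, ← Finset.sum_sub_distrib]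
        refine Finset.sum_congr rfl fun z _ => ?_
        simp only [hgdef]
        ring
      rw [hlg, hlapU y hyB]
      have := hsub y hy
      linarith
    have hMHg := hMH x r hr g hg0 hgsub
    rw [← hBall, Set.ncard_coe_finset, finsum_mem_coe_finset, ← hNdef] at hMHg
    have hfg : ∀ z, f z ≤ g z := by
      intro z
      have := hUleAll z
      simp only [hgdef]
      linarith
    have hSg0 : 0 ≤ ⨆ y ∈ gball G x r, g y ^ 2 :=
      le_trans (sq_nonneg (g x)) (mh_le_bsup hball_r_fin (F := fun y => g y ^ 2) hxr)
    have hSfSg : Sf ≤ ⨆ y ∈ gball G x r, g y ^ 2 := by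
      rw [hSfdef]
      refine Real.iSup_le (fun y => Real.iSup_le (fun hy => ?_) hSg0) hSg0
      have h1 : f y ^ 2 ≤ g y ^ 2 := by nlinarith [hf0 y, hfg y]
      exact h1.trans (mh_le_bsup hball_r_fin (F := fun y => g y ^ 2) hy)
    have hSum : ∑ y ∈ Bfin, g y ^ 2 ≤ 2 * Sumf + 2 * cc^2 * N := by
      have h1 : ∀ y ∈ Bfin, g y ^ 2 ≤ 2 * f y ^ 2 + 2 * cc^2 := by
        intro y hy
        have h2 := hUle y hy
        have h3 := hU0 y
        have h4 := hf0 y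
        simp only [hgdef]
        nlinarith [sq_nonneg (f y - (cc - U y)),
          mul_nonneg h3 (by linarith : (0:ℝ) ≤ cc + (cc - U y))]
      calc ∑ y ∈ Bfin, g y ^ 2 ≤ ∑ y ∈ Bfin, (2 * f y ^ 2 + 2 * cc^2) :=
            Finset.sum_le_sum h1
        _ = 2 * Sumf + 2 * cc^2 * N := by
            rw [Finset.sum_add_distrib, ← Finset.mul_sum, Finset.sum_const, nsmul_eq_mul,
              hSumfdef, hNdef]
            ring
    set Sg : ℝ := ⨆ y ∈ gball G x r, g y ^ 2 with hSgdef
    set Sumg : ℝ := ∑ y ∈ Bfin, g y ^ 2 with hSumgdef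
    clear_value Sg Sumg
    have e1 : N * Sf ≤ CH * Sumg := by
      have h2 := mul_le_mul_of_nonneg_left (hSfSg.trans hMHg) hNpos.le
      calc N * Sf ≤ N * (CH / N * Sumg) := h2
        _ = CH * Sumg := by field_simp
    have eA : CH * Sumg ≤ CH * (2 * Sumf + 2 * cc^2 * N) :=
      mul_le_mul_of_nonneg_left hSum hCH.le
    have eB : CH * (2 * Sumf + 2 * cc^2 * N) = 2*CH*Sumf + (32 * CH * c₁^2 * r^4) * N := by
      rw [hccdef]
      ring
    have e4 : 32 * CH * c₁^2 * r^4 ≤ c₂ * r^4 := by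
      have h4 : (0:ℝ) ≤ r^4 := by positivity
      have h5 : 32*CH*c₁^2 ≤ c₂ := by
        rw [hc₂def]
        nlinarith [pow_nonneg (Nat.cast_nonneg (Nat.card V) : (0:ℝ) ≤ (Nat.card V : ℝ)) 4]
      exact mul_le_mul_of_nonneg_right h5 h4
    have eC : (32 * CH * c₁^2 * r^4) * N ≤ (c₂ * r^4) * N :=
      mul_le_mul_of_nonneg_right e4 hNpos.le
    have goal' : N * Sf - (c₂ * r^4) * N ≤ 2*CH*Sumf := by linarith
    nlinarith [goal']
  · -- the ball is everything: finite vertex set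
    have hproper' : ∀ w : V, w ∈ Bfin := fun w => not_not.mp (fun hc => hproper ⟨w, hc⟩)
    haveI hft : Fintype V := ⟨Bfin, hproper'⟩
    have hBuniv : Bfin = Finset.univ := Finset.eq_univ_iff_forall.mpr hproper'
    have hcardV : Bfin.card = Fintype.card V := by rw [hBuniv, Finset.card_univ]
    have hmemB : ∀ y : V, y ∈ gball G x (2*r) := by
      intro y
      rw [← hBall]
      exact Finset.mem_coe.mpr (hproper' y)
    have hf1 : ∀ y, -lap G f y ≤ 1 := fun y => hsub y (hmemB y)
    set n : ℝ := (Fintype.card V : ℝ) with hndef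
    haveI : Nonempty V := ⟨x⟩
    have hune : (Finset.univ : Finset V).Nonempty := Finset.univ_nonempty
    obtain ⟨ym, hymmem, hymeq⟩ := Finset.exists_mem_eq_inf' hune f
    set m : ℝ := Finset.univ.inf' hune f with hmdef
    have hm0 : 0 ≤ m := by
      rw [hymeq]
      exact hf0 ym
    have hn0 : (0:ℝ) ≤ n := Nat.cast_nonneg _
    have hosc : ∀ y₀ : V, f y₀ ≤ m + n^2 := by
      intro y₀
      have h1 := mh_osc G hconn f hf1 y₀ ym
      have h2 : f ym = m := hymeq.symm
      rw [h2] at h1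
      rw [hndef]
      linarith
    have hSfb : Sf ≤ 2*m^2 + 2*n^4 := by
      rw [hSfdef]
      apply mh_bsup_le (by positivity)
      intro y hy
      nlinarith [hosc y, hm0, hf0 y, Finset.inf'_le f (Finset.mem_univ y),
        sq_nonneg (m - n^2)]
    have hSumm : n * m^2 ≤ Sumf := by
      have h1 : ∀ y ∈ Bfin, m^2 ≤ f y ^ 2 := by
        intro y _
        have h2 : m ≤ f y := Finset.inf'_le f (Finset.mem_univ y)
        nlinarith [hm0]
      calc n * m^2 = ((Bfin.card : ℕ) : ℝ) * m^2 := by rw [hndef, hcardV]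
        _ = ∑ _y ∈ Bfin, m^2 := by rw [Finset.sum_const, nsmul_eq_mul]
        _ ≤ Sumf := by rw [hSumfdef]; exact Finset.sum_le_sum h1
    -- CH ≥ 1
    have hCH1 : 1 ≤ CH := by
      have hb2fin : (gball G x (2*1)).Finite := mh_ball_finite hlf x (2*1)
      have hx1 : x ∈ gball G x 1 := by
        refine ⟨SimpleGraph.Reachable.refl x, ?_⟩
        rw [SimpleGraph.dist_self]
        push_cast
        linarith
      have hx2 : x ∈ gball G x (2*1) := by
        refine ⟨SimpleGraph.Reachable.refl x, ?_⟩
        rw [SimpleGraph.dist_self]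
        push_cast
        linarith
      have happ := hMH x 1 le_rfl (fun _ => 1) (fun _ => zero_le_one)
        (fun y _ => by simp [lap])
      have hL1 : (1:ℝ) ≤ ⨆ y ∈ gball G x 1, (fun _ : V => (1:ℝ)) y ^ 2 := by
        have := mh_le_bsup (mh_ball_finite hlf x 1)
          (F := fun y => (fun _ : V => (1:ℝ)) y ^ 2) hx1
        simpa using this
      have hcardpos : (0:ℝ) < ((gball G x (2*1)).ncard : ℝ) := by
        have h1 : (gball G x (2*1)).ncard = hb2fin.toFinset.card := by
          rw [← Set.ncard_coe_finset, hb2fin.coe_toFinset]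
        rw [h1]
        exact_mod_cast Finset.card_pos.mpr ⟨x, hb2fin.mem_toFinset.mpr hx2⟩
      have hsum1 : ∑ᶠ y ∈ gball G x (2*1), (fun _ : V => (1:ℝ)) y ^ 2
          = ((gball G x (2*1)).ncard : ℝ) := by
        rw [← hb2fin.coe_toFinset, finsum_mem_coe_finset, Set.ncard_coe_finset]
        simp
      rw [hsum1, div_mul_cancel₀ CH (ne_of_gt hcardpos)] at happ
      exact le_trans hL1 happ
    have hc₂n : 2 * n^4 ≤ c₂ := by
      rw [hc₂def, hndef, Nat.card_eq_fintype_card]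
      nlinarith [mul_pos (mul_pos (by norm_num : (0:ℝ) < 32) hCH) (pow_pos hc₁ 2)]
    have hr4 : (1:ℝ) ≤ r^4 := by
      have := pow_le_pow_left₀ (zero_le_one) hr 4
      simpa using this
    have hSum0 : 0 ≤ Sumf := by
      rw [hSumfdef]
      exact Finset.sum_nonneg (fun y _ => sq_nonneg _)
    have hc₂0 : 0 ≤ c₂ := by positivity
    have hkey : Sf - c₂*r^4 ≤ 2*m^2 := by
      have h6 : c₂ * 1 ≤ c₂ * r^4 := mul_le_mul_of_nonneg_left hr4 hc₂0
      linarith [hSfb, hc₂n]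
    have hNn : N = n := by
      rw [hNdef, hndef, hcardV]
    rw [hNn]
    have hmul : n * (Sf - c₂*r^4) ≤ n * (2*m^2) := mul_le_mul_of_nonneg_left hkey hn0
    have hch : 0 ≤ (CH - 1) * Sumf := mul_nonneg (by linarith) hSum0
    nlinarith [hmul, hSumm, hch]

end LandscapeGraph
end
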